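/- arXiv:2102.07462 — 4 statements merged into one kernel-verified Lean document; each statement's English description precedes it below -/
import Mathlib

section
/- Let u ∈ M_{n,d,t} have index sequence i_1 < i_2 < ⋯ < i_d with i_d = n, and suppose that i_{j+1} − i_j > t for some j ∈ {1,…,d−1}; set p = max{j : i_{j+1} − i_j > t}. Let v be the monomial with index set {i_1,…,i_{p−1}} ∪ {i_p + 1 + mt : 0 ≤ m ≤ d−p−1} ∪ {n}, i.e. v = x_{i_1} ⋯ x_{i_{p−1}} x_{i_p+1} x_{i_p+1+t} ⋯ x_{i_p+1+t(d−p−1)} x_n. Then v ∈ M_{n,d,t}, max(v) = n, u >_slex v, and v is the greatest element, with respect to the squarefree lexicographic order, of the set {w ∈ M_{n,d,t} : max(w) = n and u >_slex w}. -/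
open Finset

/-- `tSpread n t u` : `u` is the support of a `t`-spread monomial in `x_1,…,x_n`,
i.e. `u ⊆ {1,…,n}` and any two distinct elements of `u` differ by at least `t`. -/
def tSpread (n t : ℕ) (u : Finset ℕ) : Prop :=
  (∀ i ∈ u, 1 ≤ i ∧ i ≤ n) ∧ ∀ i ∈ u, ∀ j ∈ u, i < j → i + t ≤ j

/-- `M n d t` : the set of (supports of) `t`-spread monomials of degree `d` in `x_1,…,x_n`. -/
def M (n d t : ℕ) : Finset (Finset ℕ) :=
  (Finset.Icc 1 n).powerset.filter fun u => u.card = d ∧ ∀ i ∈ u, ∀ j ∈ u, i < j → i + t ≤ j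

/-- `slexGT u v` : `u >_slex v`, the strict squarefree lexicographic order on supports:
the smallest index where `u` and `v` differ belongs to `u`. -/
def slexGT (u v : Finset ℕ) : Prop :=
  ∃ m, m ∈ u ∧ m ∉ v ∧ ∀ x, x < m → (x ∈ u ↔ x ∈ v)

/-- `u ≥_slex v`. -/
def slexGE (u v : Finset ℕ) : Prop := u = v ∨ slexGT u v

/-- One `t`-spread Borel move: replace an index `j` of `u` by a smaller index `i ∉ u`,
provided the result is again `t`-spread. -/
def borelMove (n t : ℕ) (u v : Finset ℕ) : Prop :=
  ∃ j ∈ u, ∃ i, 1 ≤ i ∧ i < j ∧ i ∉ u ∧ v = insert i (u.erase j) ∧ tSpread n t v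

/-- `BtD n t u` : the degree-`d` part `B_t(u)_d` of the `t`-spread strongly stable ideal
generated by `u`: all monomials reachable from `u` by finitely many `t`-spread Borel moves. -/
def BtD (n t : ℕ) (u : Finset ℕ) : Set (Finset ℕ) :=
  {v | Relation.ReflTransGen (borelMove n t) u v}

/-- The `t`-spread shadow of a set of `t`-spread monomials. -/
def shad (n t : ℕ) (T : Set (Finset ℕ)) : Set (Finset ℕ) :=
  {v | ∃ w ∈ T, ∃ i, i ∉ w ∧ v = insert i w ∧ tSpread n t v}

/-- The basic monomials `ω_j`: `ω_0 = x_1 x_n`, and for `j ≥ 1`,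
`ω_j = x_2 x_{3+t} x_{4+2t} ⋯ x_{(j+1)+(j-1)t} x_{(j+1)+jt} x_n`. -/
def omegaMon (n t j : ℕ) : Finset ℕ :=
  if j = 0 then {1, n}
  else ((Finset.range j).image fun i => 2 + i * (1 + t)) ∪ {j + 1 + j * t, n}

/-- The set `Ω_j`. -/
def OmegaSet (n t j : ℕ) : Set (Finset ℕ) :=
  {u | u ∈ M n (j + 2) t ∧ n ∈ u ∧
    ∀ i < j, u ∉ (shad n t)^[j - i] (BtD n t (omegaMon n t i))}

noncomputable section

/-- The squarefree monomial `x_u = ∏_{i ∈ u} x_i`. -/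
def sqmon (K : Type*) [Field K] (u : Finset ℕ) : MvPolynomial ℕ K :=
  ∏ i ∈ u, MvPolynomial.X i

/-- `I` is a `t`-spread strongly stable ideal of `K[x_1,…,x_n]`. -/
def IsTSS (K : Type*) [Field K] (n t : ℕ) (I : Ideal (MvPolynomial ℕ K)) : Prop :=
  (∃ G : Set (Finset ℕ), (∀ u ∈ G, tSpread n t u) ∧ I = Ideal.span (sqmon K '' G)) ∧
  ∀ u : Finset ℕ, tSpread n t u → sqmon K u ∈ I →
    ∀ j ∈ u, ∀ i, 1 ≤ i → i < j → i ∉ u →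
      tSpread n t (insert i (u.erase j)) → sqmon K (insert i (u.erase j)) ∈ I

/-- The supports of the minimal monomial generators `G(I)` of a squarefree monomial ideal. -/
def minGens (K : Type*) [Field K] (I : Ideal (MvPolynomial ℕ K)) : Set (Finset ℕ) :=
  {u | sqmon K u ∈ I ∧ ∀ v : Finset ℕ, v ⊂ u → sqmon K v ∉ I}

/-- The initial degree of `I`: the least degree of a nonzero homogeneous element of `I`. -/
def indeg (K : Type*) [Field K] (I : Ideal (MvPolynomial ℕ K)) : ℕ :=
  sInf {d | ∃ p ∈ I, p ≠ 0 ∧ MvPolynomial.IsHomogeneous p d}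

/-- `max(u)` for a support `u` (with `max(1) = 0`). -/
def fmax (u : Finset ℕ) : ℕ := u.sup id

/-- `(k,ℓ)` is a corner of the `t`-spread strongly stable ideal `I`. -/
def IsIdealCorner (K : Type*) [Field K] (t : ℕ) (I : Ideal (MvPolynomial ℕ K)) (k ℓ : ℕ) : Prop :=
  1 ≤ k ∧ 1 ≤ ℓ ∧
  (∃ u ∈ minGens K I, u.card = ℓ ∧ fmax u = k + t * (ℓ - 1) + 1) ∧
  (∀ u ∈ minGens K I, u.card = ℓ → fmax u ≤ k + t * (ℓ - 1) + 1) ∧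
  ∀ j, ℓ < j → ∀ u ∈ minGens K I, u.card = j → fmax u < k + t * (j - 1) + 1

/-- The value of the corner `(k,ℓ)`: the number of `u ∈ G(I)_ℓ` with `max(u) = k+t(ℓ-1)+1`. -/
def cornValue (K : Type*) [Field K] (t : ℕ) (I : Ideal (MvPolynomial ℕ K)) (k ℓ : ℕ) : ℕ :=
  Set.ncard {u ∈ minGens K I | u.card = ℓ ∧ fmax u = k + t * (ℓ - 1) + 1}

/-- The corner sequence `Corn(I)` of `I`. -/
def Corn (K : Type*) [Field K] (t : ℕ) (I : Ideal (MvPolynomial ℕ K)) : Set (ℕ × ℕ) :=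
  {p | IsIdealCorner K t I p.1 p.2}

end

private lemma spread_bound (t : ℕ) : ∀ (S : Finset ℕ) (a b : ℕ),
    (∀ x ∈ S, a ≤ x ∧ x ≤ b) →
    (∀ x ∈ S, ∀ y ∈ S, x < y → x + t ≤ y) →
    S.Nonempty → a + (S.card - 1) * t ≤ b := by
  intro S
  induction S using Finset.strongInduction with
  | _ S ih =>
    intro a b hab hsp hne
    set m0 := S.min' hne with hm0
    have hm0S : m0 ∈ S := S.min'_mem hne
    have hm0min : ∀ x ∈ S, m0 ≤ x := fun x hx => S.min'_le x hx
    by_cases h1 : S.card ≤ 1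
    · have hc : S.card - 1 = 0 := by omega
      rw [hc, zero_mul, add_zero]
      exact le_trans (hab m0 hm0S).1 (hab m0 hm0S).2
    · have hC : 2 ≤ S.card := by omega
      have hsub : S.erase m0 ⊂ S := Finset.erase_ssubset hm0S
      have hcard' : (S.erase m0).card = S.card - 1 := Finset.card_erase_of_mem hm0S
      have hne' : (S.erase m0).Nonempty := Finset.card_pos.mp (by omega)
      have hkey := ih (S.erase m0) hsub (m0 + t) b ?_ ?_ hne'
      · have h2 : S.card - 1 = ((S.erase m0).card - 1) + 1 := by omega
        have ham0 := (hab m0 hm0S).1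
        have h3 : a + (S.card - 1) * t = a + (((S.erase m0).card - 1) * t + t) := by
          rw [h2, add_mul, one_mul]
        linarith
      · intro x hx
        have hxS : x ∈ S := Finset.mem_of_mem_erase hx
        have hxne : x ≠ m0 := Finset.ne_of_mem_erase hx
        have hlt : m0 < x := lt_of_le_of_ne (hm0min x hxS) (Ne.symm hxne)
        exact ⟨hsp m0 hm0S x hxS hlt, (hab x hxS).2⟩
      · intro x hx y hy hxy
        exact hsp x (Finset.mem_of_mem_erase hx) y (Finset.mem_of_mem_erase hy) hxy

/-- if `u ∈ M_{n,d,t}` has `max(u) = n` and some gap `> t`, with `p` the last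
position with a gap `> t`, then `v = x_{i_1} ⋯ x_{i_{p-1}} x_{i_p+1} x_{i_p+1+t} ⋯
x_{i_p+1+t(d-p-1)} x_n` is the greatest element of `M_{n,d,t}` with last index `n` that is
strictly smaller than `u` in the squarefree lexicographic order. -/
theorem stmt4 (n t d : ℕ) (hn : 1 ≤ n) (ht : 1 ≤ t) (hd : 1 ≤ d)
    (i : ℕ → ℕ) (u : Finset ℕ) (hu : u = (Finset.Icc 1 d).image i)
    (huM : u ∈ M n d t)
    (hmono : ∀ j, 1 ≤ j → j < d → i j < i (j + 1))
    (hend : i d = n)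
    (p : ℕ) (hp1 : 1 ≤ p) (hpd : p < d)
    (hpgap : i p + t < i (p + 1))
    (hpmax : ∀ j, p < j → j < d → i (j + 1) = i j + t)
    (v : Finset ℕ)
    (hv : v = ((Finset.Icc 1 (p - 1)).image i ∪
          (Finset.range (d - p)).image (fun m => i p + 1 + m * t)) ∪ {n}) :
    v ∈ M n d t ∧ n ∈ v ∧ slexGT u v ∧
    ∀ w ∈ M n d t, n ∈ w → slexGT u w → slexGE v w := by

  -- unpack u ∈ M
  simp only [M, mem_filter, mem_powerset] at huM
  obtain ⟨husub, hucard, huspread⟩ := huM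
  have hmemu : ∀ x, x ∈ u ↔ ∃ j, 1 ≤ j ∧ j ≤ d ∧ i j = x := by
    intro x
    simp only [hu, mem_image, mem_Icc]
    constructor
    · rintro ⟨j, ⟨h1, h2⟩, h3⟩; exact ⟨j, h1, h2, h3⟩
    · rintro ⟨j, h1, h2, h3⟩; exact ⟨j, ⟨h1, h2⟩, h3⟩
  have iu : ∀ j, 1 ≤ j → j ≤ d → i j ∈ u := fun j h1 h2 => (hmemu _).mpr ⟨j, h1, h2, rfl⟩
  have hbnd : ∀ j, 1 ≤ j → j ≤ d → 1 ≤ i j ∧ i j ≤ n :=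
    fun j h1 h2 => mem_Icc.mp (husub (iu j h1 h2))
  -- strict monotonicity
  have hlt : ∀ b a, 1 ≤ a → a < b → b ≤ d → i a < i b := by
    intro b
    induction b with
    | zero => intro a _ h _; omega
    | succ b ih =>
      intro a ha hab hbd
      rcases Nat.lt_or_ge a b with h | h
      · exact lt_trans (ih a ha h (by omega)) (hmono b (by omega) (by omega))
      · have haa : a = b := by omega
        subst haa
        exact hmono a ha (by omega)
  have hle : ∀ a b, 1 ≤ a → a ≤ b → b ≤ d → i a ≤ i b := by
    intro a b h1 h2 h3
    rcases Nat.lt_or_ge a b with h | h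
    · exact le_of_lt (hlt b a h1 h h3)
    · have : a = b := by omega
      subst this; exact le_rfl
  -- tail of u is a t-chain
  have htail : ∀ k j, p < j → j + k = d → i j + k * t = i d := by
    intro k
    induction k with
    | zero =>
      intro j hj hjd
      have : j = d := by omega
      subst this; simp
    | succ k ih =>
      intro j hj hjd
      have h1 : i (j + 1) = i j + t := hpmax j hj (by omega)
      have h2 := ih (j + 1) (by omega) (by omega)
      rw [h1] at h2
      have h3 : (k + 1) * t = k * t + t := by ring
      linarith
  have hkey : i p + 1 + (d - p) * t ≤ n := by
    have h1 := htail (d - (p + 1)) (p + 1) (by omega) (by omega)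
    rw [hend] at h1
    have h2 : (d - p) * t = (d - (p + 1)) * t + t := by
      have h : d - p = (d - (p + 1)) + 1 := by omega
      rw [h, add_mul, one_mul]
    linarith [hpgap]
  have hblk : ∀ m, m < d - p → i p + 1 + m * t + t ≤ n := by
    intro m hm
    have h3 : (m + 1) * t ≤ (d - p) * t := Nat.mul_le_mul_right t (by omega)
    have h4 : (m + 1) * t = m * t + t := by ring
    linarith [hkey]
  have hipj : ∀ j, 1 ≤ j → j ≤ p - 1 → i j < i p :=
    fun j h1 h2 => hlt p j h1 (by omega) (by omega)
  have hipd : i p < n := by rw [← hend]; exact hlt d p hp1 hpd le_rfl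
  -- membership in v
  have hmemv : ∀ x, x ∈ v ↔ (∃ j, 1 ≤ j ∧ j ≤ p - 1 ∧ i j = x) ∨
      (∃ m, m < d - p ∧ i p + 1 + m * t = x) ∨ x = n := by
    intro x
    simp only [hv, mem_union, mem_image, mem_Icc, mem_range, mem_singleton]
    constructor
    · rintro ((⟨j, ⟨h1, h2⟩, h3⟩ | ⟨m, h1, h2⟩) | h)
      · exact Or.inl ⟨j, h1, h2, h3⟩
      · exact Or.inr (Or.inl ⟨m, h1, h2⟩)
      · exact Or.inr (Or.inr h)
    · rintro (⟨j, h1, h2, h3⟩ | ⟨m, h1, h2⟩ | h)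
      · exact Or.inl (Or.inl ⟨j, ⟨h1, h2⟩, h3⟩)
      · exact Or.inl (Or.inr ⟨m, h1, h2⟩)
      · exact Or.inr h
  -- v ⊆ Icc 1 n
  have hvsub : v ⊆ Finset.Icc 1 n := by
    intro x hx
    rcases (hmemv x).mp hx with ⟨j, h1, h2, h3⟩ | ⟨m, h1, h2⟩ | h
    · rw [← h3]; exact mem_Icc.mpr (hbnd j h1 (by omega))
    · rw [mem_Icc, ← h2]
      have := hblk m h1
      constructor
      · linarith [Nat.zero_le (m * t)]
      · linarith
    · rw [h]; exact mem_Icc.mpr ⟨hn, le_rfl⟩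
  -- injectivity
  have hinj : ∀ r, r ≤ d → Set.InjOn i ↑(Finset.Icc 1 r) := by
    intro r hr a ha b hb hab
    simp only [Finset.coe_Icc, Set.mem_Icc] at ha hb
    by_contra hne
    rcases Nat.lt_or_ge a b with h | h
    · exact absurd hab (Nat.ne_of_lt (hlt b a ha.1 h (by omega)))
    · have h2 : b < a := by omega
      exact absurd hab.symm (Nat.ne_of_lt (hlt a b hb.1 h2 (by omega)))
  have hinj2 : Set.InjOn (fun m => i p + 1 + m * t) ↑(Finset.range (d - p)) := by
    intro a _ b _ hab
    simp only at hab
    have : a * t = b * t := by omega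
    exact Nat.eq_of_mul_eq_mul_right (by omega) this
  -- disjointness
  have hd1 : Disjoint ((Finset.Icc 1 (p - 1)).image i)
      ((Finset.range (d - p)).image (fun m => i p + 1 + m * t)) := by
    rw [Finset.disjoint_left]
    intro x hx1 hx2
    simp only [mem_image, mem_Icc, mem_range] at hx1 hx2
    obtain ⟨j, ⟨hj1, hj2⟩, hj3⟩ := hx1
    obtain ⟨m, hm1, hm2⟩ := hx2
    have h5 : x < i p := by rw [← hj3]; exact hipj j hj1 hj2
    have h6 : i p + 1 ≤ x := by rw [← hm2]; linarith [Nat.zero_le (m * t)]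
    omega
  have hd2 : Disjoint ((Finset.Icc 1 (p - 1)).image i ∪
      (Finset.range (d - p)).image (fun m => i p + 1 + m * t)) ({n} : Finset ℕ) := by
    rw [Finset.disjoint_left]
    intro x hx1 hx2
    rw [mem_singleton] at hx2
    rw [mem_union] at hx1
    rcases hx1 with h | h
    · simp only [mem_image, mem_Icc] at h
      obtain ⟨j, ⟨hj1, hj2⟩, hj3⟩ := h
      have h5 : i j < n := by rw [← hend]; exact hlt d j hj1 (by omega) le_rfl
      omega
    · simp only [mem_image, mem_range] at h
      obtain ⟨m, hm1, hm2⟩ := h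
      have h5 := hblk m hm1
      rw [hx2] at hm2
      linarith
  have hvcard : v.card = d := by
    rw [hv, Finset.card_union_of_disjoint hd2, Finset.card_union_of_disjoint hd1,
      Finset.card_image_of_injOn (hinj (p - 1) (by omega)),
      Finset.card_image_of_injOn hinj2, Nat.card_Icc, Finset.card_range,
      Finset.card_singleton]
    omega
  -- v is t-spread
  have hspv : ∀ a ∈ v, ∀ b ∈ v, a < b → a + t ≤ b := by
    intro a ha b hb hab
    rcases (hmemv a).mp ha with ⟨j1, hj1, hj2, hj3⟩ | ⟨m1, hm1, hm2⟩ | h1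
    · have hau : a ∈ u := by rw [← hj3]; exact iu j1 hj1 (by omega)
      rcases (hmemv b).mp hb with ⟨j2, hk1, hk2, hk3⟩ | ⟨m2, hm1', hm2'⟩ | h2
      · have hbu : b ∈ u := by rw [← hk3]; exact iu j2 hk1 (by omega)
        exact huspread a hau b hbu hab
      · have h5 : a < i p := by rw [← hj3]; exact hipj j1 hj1 hj2
        have h6 : a + t ≤ i p := huspread a hau (i p) (iu p hp1 (by omega)) h5
        have h7 : i p ≤ b := by rw [← hm2']; linarith [Nat.zero_le (m2 * t)]
        omega
      · have hbu : b ∈ u := by rw [h2, ← hend]; exact iu d hd le_rfl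
        exact huspread a hau b hbu hab
    · rcases (hmemv b).mp hb with ⟨j2, hk1, hk2, hk3⟩ | ⟨m2, hm1', hm2'⟩ | h2
      · exfalso
        have h5 : b < i p := by rw [← hk3]; exact hipj j2 hk1 hk2
        have h6 : i p + 1 ≤ a := by rw [← hm2]; linarith [Nat.zero_le (m1 * t)]
        omega
      · have hmm : m1 < m2 := by
          by_contra hcon
          push_neg at hcon
          have h5 : m2 * t ≤ m1 * t := Nat.mul_le_mul_right t hcon
          have h6 : b ≤ a := by rw [← hm2, ← hm2']; linarith
          omega
        have h5 : (m1 + 1) * t ≤ m2 * t := Nat.mul_le_mul_right t (by omega)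
        have h6 : (m1 + 1) * t = m1 * t + t := by ring
        rw [← hm2, ← hm2']
        linarith
      · rw [← hm2, h2]
        exact hblk m1 hm1
    · exfalso
      have := (mem_Icc.mp (hvsub hb)).2
      omega
  have hvM : v ∈ M n d t := by
    simp only [M, mem_filter, mem_powerset]
    exact ⟨hvsub, hvcard, hspv⟩
  have hnv : n ∈ v := (hmemv n).mpr (Or.inr (Or.inr rfl))
  have hipv : i p ∉ v := by
    intro hcon
    rcases (hmemv _).mp hcon with ⟨j, h1, h2, h3⟩ | ⟨m, h1, h2⟩ | h
    · exact absurd h3 (Nat.ne_of_lt (hipj j h1 h2))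
    · linarith [Nat.zero_le (m * t), h2]
    · omega
  have huvlow : ∀ x, x < i p → (x ∈ u ↔ x ∈ v) := by
    intro x hx
    constructor
    · intro hxu
      obtain ⟨j, h1, h2, h3⟩ := (hmemu x).mp hxu
      have hj : j < p := by
        by_contra hcon
        push_neg at hcon
        have := hle p j hp1 hcon h2
        omega
      exact (hmemv x).mpr (Or.inl ⟨j, h1, by omega, h3⟩)
    · intro hxv
      rcases (hmemv x).mp hxv with ⟨j, h1, h2, h3⟩ | ⟨m, h1, h2⟩ | h
      · exact (hmemu x).mpr ⟨j, h1, by omega, h3⟩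
      · exfalso; linarith [Nat.zero_le (m * t), h2]
      · exfalso; omega
  have hslexuv : slexGT u v :=
    ⟨i p, iu p hp1 (by omega), hipv, fun x hx => huvlow x hx⟩
  refine ⟨hvM, hnv, hslexuv, ?_⟩
  -- maximality
  intro w hwM hnw hslexw
  simp only [M, mem_filter, mem_powerset] at hwM
  obtain ⟨hwsub, hwcard, hwsp⟩ := hwM
  obtain ⟨m, hmu, hmw, hag⟩ := hslexw
  obtain ⟨q, hq1, hqd, rfl⟩ := (hmemu m).mp hmu
  have hqlt : q < d := by
    by_contra hcon
    have : q = d := by omega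
    subst this
    rw [hend] at hmw
    exact hmw hnw
  rcases lt_trichotomy q p with hqp | hqp | hqp
  · -- q < p : v >slex w with witness i q
    right
    refine ⟨i q, (hmemv _).mpr (Or.inl ⟨q, hq1, by omega, rfl⟩), hmw, ?_⟩
    intro x hx
    constructor
    · intro hxv
      rcases (hmemv x).mp hxv with ⟨j, h1, h2, h3⟩ | ⟨m', h1, h2⟩ | h
      · exact (hag x hx).mp ((hmemu x).mpr ⟨j, h1, by omega, h3⟩)
      · exfalso
        have h5 : i q < i p := hlt p q hq1 hqp (by omega)
        linarith [Nat.zero_le (m' * t), h2]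
      · exfalso
        have h5 : i q < n := by rw [← hend]; exact hlt d q hq1 hqlt le_rfl
        omega
    · intro hxw
      obtain ⟨j, h1, h2, h3⟩ := (hmemu x).mp ((hag x hx).mpr hxw)
      have hj : j < q := by
        by_contra hcon
        push_neg at hcon
        have := hle q j hq1 hcon h2
        omega
      exact (hmemv x).mpr (Or.inl ⟨j, h1, by omega, h3⟩)
  · -- q = p : the interesting case
    subst q
    by_cases hvw : v = w
    · exact Or.inl hvw
    right
    have hD : ((v \ w) ∪ (w \ v)).Nonempty := by
      by_contra hcon
      rw [Finset.not_nonempty_iff_eq_empty] at hcon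
      have hempty := Finset.eq_empty_iff_forall_notMem.mp hcon
      apply hvw
      ext x
      constructor <;> intro hx <;> by_contra hx2
      · exact hempty x (mem_union.mpr (Or.inl (Finset.mem_sdiff.mpr ⟨hx, hx2⟩)))
      · exact hempty x (mem_union.mpr (Or.inr (Finset.mem_sdiff.mpr ⟨hx, hx2⟩)))
    set D := (v \ w) ∪ (w \ v) with hDdef
    set μ := D.min' hD with hμdef
    have hμD : μ ∈ D := D.min'_mem hD
    have hagvw : ∀ x, x < μ → (x ∈ v ↔ x ∈ w) := by
      intro x hx
      by_contra hcon
      have hxD : x ∈ D := by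
        rw [hDdef, mem_union, Finset.mem_sdiff, Finset.mem_sdiff]
        by_cases h : x ∈ v
        · exact Or.inl ⟨h, fun hw => hcon ⟨fun _ => hw, fun _ => h⟩⟩
        · refine Or.inr ⟨?_, h⟩
          by_contra hw
          exact hcon ⟨fun hv' => absurd hv' h, fun hw' => absurd hw' hw⟩
      have := D.min'_le x hxD
      omega
    have hμvw : (μ ∈ v ∧ μ ∉ w) ∨ (μ ∈ w ∧ μ ∉ v) := by
      have h := hμD
      rw [hDdef, mem_union, Finset.mem_sdiff, Finset.mem_sdiff] at h
      exact h
    have hμp : i p < μ := by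
      by_contra hcon
      push_neg at hcon
      rcases Nat.lt_or_ge μ (i p) with h2 | h2
      · have h3 := huvlow μ h2
        have h4 := hag μ h2
        tauto
      · have h5 : μ = i p := by omega
        rw [h5] at hμvw
        tauto
    rcases hμvw with ⟨h1, h2⟩ | ⟨hμw, hμnv⟩
    · exact ⟨μ, h1, h2, fun x hx => hagvw x hx⟩
    · exfalso
      have hblk0 : i p + 1 ∈ v := by
        refine (hmemv _).mpr (Or.inr (Or.inl ⟨0, by omega, by simp⟩))
      have hμ2 : i p + 1 < μ := by
        rcases Nat.lt_or_ge (i p + 1) μ with h | h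
        · exact h
        · exfalso
          have : μ = i p + 1 := by omega
          rw [this] at hμnv
          exact hμnv hblk0
      set K := (Finset.range (d - p)).filter (fun m' => i p + 1 + m' * t < μ) with hK
      have h0K : (0 : ℕ) ∈ K := by
        rw [hK, mem_filter, mem_range]
        refine ⟨by omega, by simpa using hμ2⟩
      have hKne : K.Nonempty := ⟨0, h0K⟩
      set k0 := K.max' hKne with hk0def
      have hk0K : k0 ∈ K := K.max'_mem hKne
      rw [hK, mem_filter, mem_range] at hk0K
      obtain ⟨hk0d, hk0μ⟩ := hk0K
      have hek : i p + 1 + k0 * t ∈ w := by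
        apply (hagvw _ hk0μ).mp
        exact (hmemv _).mpr (Or.inr (Or.inl ⟨k0, hk0d, rfl⟩))
      have hsp1 : i p + 1 + k0 * t + t ≤ μ := hwsp _ hek μ hμw hk0μ
      by_cases hk1 : k0 + 1 < d - p
      · have hv1 : i p + 1 + (k0 + 1) * t ∈ v :=
          (hmemv _).mpr (Or.inr (Or.inl ⟨k0 + 1, hk1, rfl⟩))
        have hne' : i p + 1 + (k0 + 1) * t ≠ μ := fun h => hμnv (h ▸ hv1)
        have h6 : (k0 + 1) * t = k0 * t + t := by ring
        have h7 : i p + 1 + (k0 + 1) * t ≤ μ := by rw [h6]; linarith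
        have hlt' : i p + 1 + (k0 + 1) * t < μ := lt_of_le_of_ne h7 hne'
        have hmemK : k0 + 1 ∈ K := by
          rw [hK, mem_filter, mem_range]; exact ⟨hk1, hlt'⟩
        have := K.le_max' _ hmemK
        omega
      · have hsubvw : v ⊆ w := by
          intro x hx
          rcases (hmemv x).mp hx with ⟨j, h1, h2, h3⟩ | ⟨m', h1, h2⟩ | h
          · refine (hagvw x ?_).mp hx
            rw [← h3]
            exact lt_trans (hipj j h1 h2) hμp
          · refine (hagvw x ?_).mp hx
            have hm'k : m' ≤ k0 := by omega
            have hmt : m' * t ≤ k0 * t := Nat.mul_le_mul_right t hm'k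
            rw [← h2]
            linarith
          · rw [h]; exact hnw
        have hins : insert μ v ⊆ w := Finset.insert_subset hμw hsubvw
        have hcard := Finset.card_le_card hins
        rw [Finset.card_insert_of_notMem hμnv, hvcard, hwcard] at hcard
        omega
  · -- p < q : impossible
    exfalso
    have hAB := Finset.card_filter_add_card_filter_not
      (s := w) (p := fun x => x < i q)
    have hAeq : w.filter (fun x => x < i q) = (Finset.Icc 1 (q - 1)).image i := by
      ext x
      simp only [mem_filter, mem_image, mem_Icc]
      constructor
      · rintro ⟨hxw, hxq⟩
        obtain ⟨j, h1, h2, h3⟩ := (hmemu x).mp ((hag x hxq).mpr hxw)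
        have hj : j < q := by
          by_contra hcon
          push_neg at hcon
          have := hle q j hq1 hcon h2
          omega
        exact ⟨j, ⟨h1, by omega⟩, h3⟩
      · rintro ⟨j, ⟨h1, h2⟩, h3⟩
        have hjq : i j < i q := hlt q j h1 (by omega) (by omega)
        have hxq : x < i q := by omega
        exact ⟨(hag x hxq).mp ((hmemu x).mpr ⟨j, h1, by omega, h3⟩), hxq⟩
    have hAcard : (w.filter (fun x => x < i q)).card = q - 1 := by
      rw [hAeq, Finset.card_image_of_injOn (hinj (q - 1) (by omega)), Nat.card_Icc]
      omega
    have hBcard : (w.filter (fun x => ¬ x < i q)).card = d - q + 1 := by omega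
    have hBne : (w.filter (fun x => ¬ x < i q)).Nonempty :=
      Finset.card_pos.mp (by omega)
    have hBbnd : ∀ x ∈ w.filter (fun x => ¬ x < i q), i q + 1 ≤ x ∧ x ≤ n := by
      intro x hx
      rw [mem_filter] at hx
      obtain ⟨hxw, hxq⟩ := hx
      push_neg at hxq
      have hxn := (mem_Icc.mp (hwsub hxw)).2
      have hne'' : x ≠ i q := fun h => hmw (h ▸ hxw)
      omega
    have hBsp : ∀ x ∈ w.filter (fun x => ¬ x < i q),
        ∀ y ∈ w.filter (fun x => ¬ x < i q), x < y → x + t ≤ y := by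
      intro x hx y hy
      rw [mem_filter] at hx hy
      exact hwsp x hx.1 y hy.1
    have hbound := spread_bound t _ (i q + 1) n hBbnd hBsp hBne
    rw [hBcard] at hbound
    have htl := htail (d - q) q hqp (by omega)
    rw [hend] at htl
    have hdq : d - q + 1 - 1 = d - q := by omega
    rw [hdq] at hbound
    linarith
end

section
/- Let t, d be integers with t ≥ 2 and 2 ≤ d ≤ t, and set n = d + 2t. Then Shad_t(B_t(x_1 x_n)_2) = B_t(x_1 x_{d+t} x_{d+2t})_3, and the smallest element of this set with respect to the squarefree lexicographic order is x_1 x_{d+t} x_{d+2t}. -/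
open Finset

section Helpers

lemma tSpread_pair' (n t a : ℕ) (hat : 1 + t ≤ a) (han : a ≤ n) :
    tSpread n t ({1, a} : Finset ℕ) := by
  constructor
  · intro i hi; simp at hi; omega
  · intro i hi j hj hij; simp at hi hj; omega

lemma tSpread_triple' (n t p q : ℕ) (hp : 1 + t ≤ p) (hq : p + t ≤ q) (hn : q ≤ n) :
    tSpread n t ({1, p, q} : Finset ℕ) := by
  constructor
  · intro i hi; simp at hi; omega
  · intro i hi j hj hij; simp at hi hj; omega

lemma btd_inv {n t : ℕ} {u v : Finset ℕ} (hu1 : 1 ∈ u) (hus : tSpread n t u)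
    (h : v ∈ BtD n t u) : v.card = u.card ∧ 1 ∈ v ∧ tSpread n t v := by
  induction h with
  | refl => exact ⟨rfl, hu1, hus⟩
  | tail h1 h2 ih =>
    obtain ⟨hc, h1w, hsw⟩ := ih
    obtain ⟨j, hj, i, hi1, hij, hiw, rfl, hsv⟩ := h2
    refine ⟨?_, ?_, hsv⟩
    · rw [Finset.card_insert_of_notMem (fun h => hiw (Finset.mem_of_mem_erase h)),
        Finset.card_erase_of_mem hj]
      have := Finset.card_pos.mpr ⟨j, hj⟩
      omega
    · exact Finset.mem_insert_of_mem (Finset.mem_erase.mpr ⟨by omega, h1w⟩)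

lemma triple_char_aux {n t y z : ℕ} (hyz : y ≠ z) (h1y : 1 ≠ y) (h1z : 1 ≠ z)
    (hs : tSpread n t ({1, y, z} : Finset ℕ)) :
    ∃ p q, 1 + t ≤ p ∧ p + t ≤ q ∧ q ≤ n ∧ ({1, y, z} : Finset ℕ) = {1, p, q} := by
  have hy := hs.1 y (by simp)
  have hz := hs.1 z (by simp)
  have sy : 1 + t ≤ y := hs.2 1 (by simp) y (by simp) (by omega)
  have sz : 1 + t ≤ z := hs.2 1 (by simp) z (by simp) (by omega)
  rcases lt_or_gt_of_ne hyz with h | h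
  · exact ⟨y, z, sy, hs.2 y (by simp) z (by simp) h, hz.2, rfl⟩
  · exact ⟨z, y, sz, hs.2 z (by simp) y (by simp) h, hy.2,
      by ext a; simp; tauto⟩

lemma triple_char {n t : ℕ} {v : Finset ℕ} (hc : v.card = 3) (h1 : 1 ∈ v)
    (hs : tSpread n t v) :
    ∃ p q, 1 + t ≤ p ∧ p + t ≤ q ∧ q ≤ n ∧ v = {1, p, q} := by
  obtain ⟨x, y, z, hxy, hxz, hyz, rfl⟩ := Finset.card_eq_three.mp hc
  simp only [Finset.mem_insert, Finset.mem_singleton] at h1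
  rcases h1 with rfl | rfl | rfl
  · exact triple_char_aux hyz hxy hxz hs
  · have e : ({x, 1, z} : Finset ℕ) = {1, x, z} := by ext a; simp; tauto
    rw [e] at hs ⊢
    exact triple_char_aux hxz (Ne.symm hxy) hyz hs
  · have e : ({x, y, 1} : Finset ℕ) = {1, x, y} := by ext a; simp; tauto
    rw [e] at hs ⊢
    exact triple_char_aux hxy (Ne.symm hxz) (Ne.symm hyz) hs

lemma pair_char {n t : ℕ} {v : Finset ℕ} (hc : v.card = 2) (h1 : 1 ∈ v)
    (hs : tSpread n t v) :
    ∃ a, 1 + t ≤ a ∧ a ≤ n ∧ v = {1, a} := by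
  obtain ⟨x, y, hxy, rfl⟩ := Finset.card_eq_two.mp hc
  simp only [Finset.mem_insert, Finset.mem_singleton] at h1
  rcases h1 with rfl | rfl
  · have hy := hs.1 y (by simp)
    exact ⟨y, hs.2 1 (by simp) y (by simp) (by omega), hy.2, rfl⟩
  · have hx := hs.1 x (by simp)
    exact ⟨x, hs.2 1 (by simp) x (by simp) (by omega), hx.2,
      by ext a; simp; tauto⟩

end Helpers

/-- for `t ≥ 2`, `2 ≤ d ≤ t`, `n = d + 2t`, one has
`Shad_t(B_t(x_1 x_n)_2) = B_t(x_1 x_{d+t} x_{d+2t})_3`, whose smallest element in the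
squarefree lexicographic order is `x_1 x_{d+t} x_{d+2t}`. -/
theorem stmt12 (t d : ℕ) (ht : 2 ≤ t) (hd2 : 2 ≤ d) (hdt : d ≤ t) :
    shad (d + 2 * t) t (BtD (d + 2 * t) t {1, d + 2 * t}) =
      BtD (d + 2 * t) t {1, d + t, d + 2 * t} ∧
    ({1, d + t, d + 2 * t} : Finset ℕ) ∈
      shad (d + 2 * t) t (BtD (d + 2 * t) t {1, d + 2 * t}) ∧
    ∀ w ∈ shad (d + 2 * t) t (BtD (d + 2 * t) t {1, d + 2 * t}),
      slexGE w ({1, d + t, d + 2 * t} : Finset ℕ) := by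
  have hsp0 : tSpread (d + 2 * t) t ({1, d + 2 * t} : Finset ℕ) :=
    tSpread_pair' _ _ _ (by omega) (by omega)
  have hspu : tSpread (d + 2 * t) t ({1, d + t, d + 2 * t} : Finset ℕ) :=
    tSpread_triple' _ _ _ _ (by omega) (by omega) (by omega)
  have hc0 : ({1, d + 2 * t} : Finset ℕ).card = 2 := Finset.card_pair (by omega)
  have hcu : ({1, d + t, d + 2 * t} : Finset ℕ).card = 3 := by
    rw [Finset.card_insert_of_notMem (by simp; omega), Finset.card_pair (by omega)]
  have MEM : ∀ p q : ℕ, 1 + t ≤ p → p + t ≤ q → q ≤ d + 2 * t →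
      ({1, p, q} : Finset ℕ) ∈ shad (d + 2 * t) t (BtD (d + 2 * t) t {1, d + 2 * t}) := by
    intro p q hp hq hqn
    have hw : ({1, q} : Finset ℕ) ∈ BtD (d + 2 * t) t {1, d + 2 * t} := by
      rcases eq_or_lt_of_le hqn with h | h
      · rw [h]; exact Relation.ReflTransGen.refl
      · exact Relation.ReflTransGen.single ⟨d + 2 * t, by simp, q, by omega, h,
          by simp; omega, by ext a; simp [Finset.mem_erase]; omega,
          tSpread_pair' _ _ _ (by omega) (by omega)⟩
    refine ⟨{1, q}, hw, p, by simp; omega, ?_, tSpread_triple' _ _ _ _ hp hq hqn⟩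
    ext a; simp; tauto
  have SUB1 : ∀ v ∈ shad (d + 2 * t) t (BtD (d + 2 * t) t {1, d + 2 * t}),
      ∃ p q, 1 + t ≤ p ∧ p + t ≤ q ∧ q ≤ d + 2 * t ∧ v = {1, p, q} := by
    intro v hv
    obtain ⟨w, hw, i, hiw, rfl, hsv⟩ := hv
    obtain ⟨hcw, h1w, _⟩ := btd_inv (by simp) hsp0 hw
    have hcv : (insert i w).card = 3 := by
      rw [Finset.card_insert_of_notMem hiw, hcw, hc0]
    exact triple_char hcv (Finset.mem_insert_of_mem h1w) hsv
  have SUB2 : ∀ p q : ℕ, 1 + t ≤ p → p + t ≤ q → q ≤ d + 2 * t →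
      ({1, p, q} : Finset ℕ) ∈ BtD (d + 2 * t) t {1, d + t, d + 2 * t} := by
    intro p q hp hq hqn
    have hpd : p ≤ d + t := by omega
    have h1 : Relation.ReflTransGen (borelMove (d + 2 * t) t)
        {1, d + t, d + 2 * t} {1, p, d + 2 * t} := by
      rcases eq_or_lt_of_le hpd with h | h
      · rw [h]
      · exact Relation.ReflTransGen.single ⟨d + t, by simp, p, by omega, h,
          by simp; omega, by ext a; simp [Finset.mem_erase]; omega,
          tSpread_triple' _ _ _ _ hp (by omega) (by omega)⟩
    have h2 : Relation.ReflTransGen (borelMove (d + 2 * t) t)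
        {1, p, d + 2 * t} {1, p, q} := by
      rcases eq_or_lt_of_le hqn with h | h
      · rw [h]
      · exact Relation.ReflTransGen.single ⟨d + 2 * t, by simp, q, by omega, h,
          by simp; omega, by ext a; simp [Finset.mem_erase]; omega,
          tSpread_triple' _ _ _ _ hp hq hqn⟩
    exact h1.trans h2
  have SUB3 : ∀ v ∈ BtD (d + 2 * t) t ({1, d + t, d + 2 * t} : Finset ℕ),
      v ∈ shad (d + 2 * t) t (BtD (d + 2 * t) t {1, d + 2 * t}) := by
    intro v hv
    obtain ⟨hcv, h1v, hsv⟩ := btd_inv (by simp) hspu hv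
    obtain ⟨p, q, hp, hq, hqn, rfl⟩ := triple_char (by rw [hcv, hcu]) h1v hsv
    exact MEM p q hp hq hqn
  refine ⟨?_, MEM (d + t) (d + 2 * t) (by omega) (by omega) le_rfl, ?_⟩
  · ext v
    constructor
    · intro hv
      obtain ⟨p, q, hp, hq, hqn, rfl⟩ := SUB1 v hv
      exact SUB2 p q hp hq hqn
    · exact SUB3 v
  · intro w hw
    unfold slexGE slexGT
    obtain ⟨p, q, hp, hq, hqn, rfl⟩ := SUB1 w hw
    rcases eq_or_lt_of_le (show p ≤ d + t by omega) with hpe | hpl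
    · rcases eq_or_lt_of_le hqn with hqe | hql
      · left; rw [hpe, hqe]
      · exact Or.inr ⟨q, by simp, by simp; omega, fun x hx => by simp; omega⟩
    · exact Or.inr ⟨p, by simp, by simp; omega, fun x hx => by simp; omega⟩
end

section
/- Let t, d, k be integers with t ≥ 2, 1 ≤ d ≤ t, k ≥ 3, set n = d + kt and j* = ⌊n/(1+t)⌋ − 1. Then for every j with 1 ≤ j ≤ j*, the set Ω_j = {u ∈ M_{n,j+2,t} : max(u) = n and u ∉ ⋃_{i=0}^{j−1} Shad_t^{j−i}(B_t(ω_i)_{i+2})} is nonempty and its greatest element with respect to the squarefree lexicographic order is ω_j. -/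
open Finset

section Aux13

lemma aux_fstep {t r s : ℕ} (h : r < s) : 2 + r*(1+t) + (1+t) ≤ 2 + s*(1+t) := by
  have h1 : (r+1)*(1+t) ≤ s*(1+t) := Nat.mul_le_mul_right _ h
  have h2 : (r+1)*(1+t) = r*(1+t) + (1+t) := by ring
  omega

lemma aux_fg {t r j : ℕ} (h : r < j) : 2 + r*(1+t) + t ≤ j + 1 + j*t := by
  have h1 := aux_fstep (t := t) h
  have h2 : j*(1+t) = j + j*t := by ring
  omega

lemma aux_gn {t j n : ℕ} (hn : (j+1)*(1+t) ≤ n) : j + 1 + j*t + t ≤ n := by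
  have h2 : (j+1)*(1+t) = j + 1 + j*t + t := by ring
  omega

lemma tSpread_subset' {n t : ℕ} {u v : Finset ℕ} (hu : tSpread n t u) (hvu : v ⊆ u) :
    tSpread n t v :=
  ⟨fun i hi => hu.1 i (hvu hi), fun i hi j hj hij => hu.2 i (hvu hi) j (hvu hj) hij⟩

lemma shad_iter_exists {n t : ℕ} : ∀ (m : ℕ) (T : Set (Finset ℕ)) (u : Finset ℕ),
    u ∈ (shad n t)^[m] T → ∃ w ∈ T, w ⊆ u := by
  intro m
  induction m with
  | zero => exact fun T u hu => ⟨u, hu, subset_rfl⟩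
  | succ m ih =>
    intro T u hu
    rw [Function.iterate_succ_apply'] at hu
    obtain ⟨w, hw, i, hiw, rfl, _⟩ := hu
    obtain ⟨w', hw', hsub⟩ := ih T w hw
    exact ⟨w', hw', hsub.trans (Finset.subset_insert _ _)⟩

/-- counting elements `≤ c`. -/
def cnt (c : ℕ) (u : Finset ℕ) : ℕ := (u.filter (fun x => x ≤ c)).card

lemma cnt_mono {c : ℕ} {w u : Finset ℕ} (h : w ⊆ u) : cnt c w ≤ cnt c u :=
  Finset.card_le_card (Finset.filter_subset_filter _ h)

lemma cnt_borel {n t c : ℕ} {u v : Finset ℕ} (h : borelMove n t u v) : cnt c u ≤ cnt c v := by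
  obtain ⟨j, hj, i, hi1, hij, hiu, rfl, _⟩ := h
  apply Finset.card_le_card_of_injOn (fun x => if x = j then i else x)
  · intro x hx
    simp only [Finset.mem_coe, Finset.mem_filter] at hx ⊢
    by_cases hxj : x = j
    · subst hxj
      simp only [if_pos rfl]
      exact ⟨Finset.mem_insert_self _ _, le_trans (le_of_lt hij) hx.2⟩
    · simp only [if_neg hxj]
      exact ⟨Finset.mem_insert_of_mem (Finset.mem_erase.mpr ⟨hxj, hx.1⟩), hx.2⟩
  · intro x hx y hy hxy
    simp only [Finset.coe_filter, Set.mem_setOf_eq] at hx hy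
    by_cases hxj : x = j <;> by_cases hyj : y = j
    · omega
    · exfalso
      simp only [if_pos hxj, if_neg hyj] at hxy
      exact hiu (hxy ▸ hy.1)
    · exfalso
      simp only [if_neg hxj, if_pos hyj] at hxy
      exact hiu (hxy ▸ hx.1)
    · simpa [if_neg hxj, if_neg hyj] using hxy

lemma cnt_btd {n t c : ℕ} {w u : Finset ℕ} (h : Relation.ReflTransGen (borelMove n t) w u) :
    cnt c w ≤ cnt c u := by
  induction h with
  | refl => exact le_refl _
  | tail _ hstep ih => exact ih.trans (cnt_borel hstep)

lemma mem_shad_iter {n t : ℕ} : ∀ (m : ℕ) (T : Set (Finset ℕ)) (w u : Finset ℕ),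
    tSpread n t u → w ⊆ u → w ∈ T → u.card = w.card + m → u ∈ (shad n t)^[m] T := by
  intro m
  induction m with
  | zero =>
    intro T w u hu hwu hwT hcard
    have : w = u := Finset.eq_of_subset_of_card_le hwu (by omega)
    subst this
    simpa using hwT
  | succ m ih =>
    intro T w u hu hwu hwT hcard
    have hne : w ≠ u := by
      intro h; subst h; omega
    obtain ⟨x, hxu, hxw⟩ := Finset.exists_of_ssubset (Finset.ssubset_iff_subset_ne.mpr ⟨hwu, hne⟩)
    rw [Function.iterate_succ_apply]
    refine ih (shad n t T) (insert x w) u hu (Finset.insert_subset hxu hwu)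
      ⟨w, hwT, x, hxw, rfl, tSpread_subset' hu (Finset.insert_subset hxu hwu)⟩ ?_
    rw [Finset.card_insert_of_notMem hxw]
    omega

lemma mem_omegaMon {n t j : ℕ} (hj : 1 ≤ j) {x : ℕ} :
    x ∈ omegaMon n t j ↔ (∃ r, r < j ∧ 2 + r * (1 + t) = x) ∨ x = j + 1 + j * t ∨ x = n := by
  rw [omegaMon, if_neg (by omega)]
  simp only [Finset.mem_union, Finset.mem_image, Finset.mem_range, Finset.mem_insert,
    Finset.mem_singleton]

lemma omegaMon_card {n t j : ℕ} (ht : 1 ≤ t) (hj : 1 ≤ j) (hn : (j+1)*(1+t) ≤ n) :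
    (omegaMon n t j).card = j + 2 := by
  have hgn := aux_gn (t := t) (j := j) hn
  rw [omegaMon, if_neg (by omega)]
  rw [Finset.card_union_of_disjoint, Finset.card_image_of_injOn, Finset.card_range]
  · rw [Finset.card_insert_of_notMem (by simp; omega), Finset.card_singleton]
  · intro a _ b _ h
    simp only at h
    have : a * (1+t) = b * (1+t) := by omega
    exact Nat.eq_of_mul_eq_mul_right (by omega) this
  · rw [Finset.disjoint_left]
    intro x hx
    simp only [Finset.mem_image, Finset.mem_range] at hx
    obtain ⟨r, hr, rfl⟩ := hx
    have := aux_fg (t := t) hr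
    simp only [Finset.mem_insert, Finset.mem_singleton]
    omega

lemma omegaMon_tSpread {n t j : ℕ} (ht : 1 ≤ t) (hj : 1 ≤ j) (hn : (j+1)*(1+t) ≤ n) :
    tSpread n t (omegaMon n t j) := by
  have hgn := aux_gn (t := t) (j := j) hn
  constructor
  · intro x hx
    rw [mem_omegaMon hj] at hx
    rcases hx with ⟨r, hr, rfl⟩ | rfl | rfl
    · have := aux_fg (t := t) hr
      omega
    · omega
    · omega
  · intro x hx y hy hlt
    rw [mem_omegaMon hj] at hx hy
    rcases hx with ⟨r, hr, rfl⟩ | rfl | rfl <;> rcases hy with ⟨r', hr', rfl⟩ | rfl | rfl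
    · have h1 : r < r' := by
        by_contra h
        have : r' ≤ r := by omega
        have := Nat.mul_le_mul_right (1+t) this
        omega
      have := aux_fstep (t := t) h1
      omega
    · have := aux_fg (t := t) hr
      omega
    · have := aux_fg (t := t) hr
      omega
    · have := aux_fg (t := t) hr'
      omega
    · omega
    · omega
    · have := aux_fg (t := t) hr'
      omega
    · omega
    · omega

lemma omegaMon_mem_M {n t j : ℕ} (ht : 1 ≤ t) (hj : 1 ≤ j) (hn : (j+1)*(1+t) ≤ n) :
    omegaMon n t j ∈ M n (j+2) t := by
  have hsp := omegaMon_tSpread ht hj hn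
  rw [M, Finset.mem_filter, Finset.mem_powerset]
  refine ⟨fun x hx => Finset.mem_Icc.mpr (hsp.1 x hx), omegaMon_card ht hj hn, hsp.2⟩

end Aux13

/-- for `1 ≤ j ≤ j* = ⌊n/(1+t)⌋ - 1`, the set `Ω_j` is nonempty and its greatest
element in the squarefree lexicographic order is `ω_j`. -/
theorem stmt13 (t d k : ℕ) (ht : 2 ≤ t) (hd1 : 1 ≤ d) (hdt : d ≤ t) (hk : 3 ≤ k) :
    ∀ j, 1 ≤ j → j ≤ (d + k * t) / (1 + t) - 1 →
      omegaMon (d + k * t) t j ∈ OmegaSet (d + k * t) t j ∧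
      ∀ u ∈ OmegaSet (d + k * t) t j, slexGE (omegaMon (d + k * t) t j) u := by
  intro j hj1 hj2
  set n := d + k * t with hn_def
  have ht1 : 1 ≤ t := by omega
  have hq : 1 + t ≤ n := by
    have : 3 * t ≤ k * t := Nat.mul_le_mul_right t hk
    omega
  have hq1 : 1 ≤ n / (1 + t) := (Nat.one_le_div_iff (by omega)).mpr hq
  have hj3 : j + 1 ≤ n / (1 + t) := by omega
  have hn : (j + 1) * (1 + t) ≤ n := (Nat.le_div_iff_mul_le (by omega)).mp hj3
  have hgn := aux_gn (t := t) (j := j) hn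
  have partA : omegaMon n t j ∈ OmegaSet n t j := by
    refine ⟨omegaMon_mem_M ht1 hj1 hn, (mem_omegaMon hj1).mpr (Or.inr (Or.inr rfl)), ?_⟩
    intro i hij hmem
    obtain ⟨w, hw, hsub⟩ := shad_iter_exists _ _ _ hmem
    by_cases hi0 : i = 0
    · subst hi0
      have h1 : cnt 1 (omegaMon n t 0) ≤ cnt 1 (omegaMon n t j) :=
        (cnt_btd hw).trans (cnt_mono hsub)
      have h2 : cnt 1 (omegaMon n t j) = 0 := by
        rw [cnt, Finset.card_eq_zero, Finset.filter_eq_empty_iff]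
        intro x hx
        rcases (mem_omegaMon hj1).mp hx with ⟨r, hr, rfl⟩ | rfl | rfl <;> omega
      have h3 : 1 ≤ cnt 1 (omegaMon n t 0) := by
        rw [cnt]
        refine Finset.card_pos.mpr ⟨1, Finset.mem_filter.mpr ⟨?_, le_refl 1⟩⟩
        rw [omegaMon, if_pos rfl]
        simp
      omega
    · have hi1 : 1 ≤ i := by omega
      have h1 : cnt (i + 1 + i * t) (omegaMon n t i) ≤ cnt (i + 1 + i * t) (omegaMon n t j) :=
        (cnt_btd hw).trans (cnt_mono hsub)
      have h2 : cnt (i + 1 + i * t) (omegaMon n t j) ≤ i := by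
        have hsubf : (omegaMon n t j).filter (fun x => x ≤ i + 1 + i * t) ⊆
            (Finset.range i).image (fun r => 2 + r * (1 + t)) := by
          intro x hx
          rw [Finset.mem_filter, mem_omegaMon hj1] at hx
          obtain ⟨hmemx, hle⟩ := hx
          simp only [Finset.mem_image, Finset.mem_range]
          rcases hmemx with ⟨r, hr, rfl⟩ | rfl | rfl
          · refine ⟨r, ?_, rfl⟩
            by_contra hri
            have h4 : i * (1 + t) ≤ r * (1 + t) := Nat.mul_le_mul_right _ (by omega)
            have h5 : i * (1 + t) = i + i * t := by ring
            omega
          · exfalso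
            have h4 : i * t ≤ j * t := Nat.mul_le_mul_right t (le_of_lt hij)
            omega
          · exfalso
            have h4 : (i + 2) * (1 + t) ≤ (j + 1) * (1 + t) := Nat.mul_le_mul_right _ (by omega)
            have h5 : (i + 2) * (1 + t) = i + 2 + i * t + 2 * t := by ring
            omega
        calc cnt (i + 1 + i * t) (omegaMon n t j) ≤ _ := Finset.card_le_card hsubf
          _ ≤ (Finset.range i).card := Finset.card_image_le
          _ = i := Finset.card_range i
      have h3 : i + 1 ≤ cnt (i + 1 + i * t) (omegaMon n t i) := by
        have hsubf : insert (i + 1 + i * t) ((Finset.range i).image (fun r => 2 + r * (1 + t))) ⊆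
            (omegaMon n t i).filter (fun x => x ≤ i + 1 + i * t) := by
          intro x hx
          rcases Finset.mem_insert.mp hx with rfl | hx
          · exact Finset.mem_filter.mpr ⟨(mem_omegaMon hi1).mpr (Or.inr (Or.inl rfl)), le_refl _⟩
          · simp only [Finset.mem_image, Finset.mem_range] at hx
            obtain ⟨r, hr, rfl⟩ := hx
            have := aux_fg (t := t) hr
            exact Finset.mem_filter.mpr ⟨(mem_omegaMon hi1).mpr (Or.inl ⟨r, hr, rfl⟩), by omega⟩
        have hcard : (insert (i + 1 + i * t)
            ((Finset.range i).image (fun r => 2 + r * (1 + t)))).card = i + 1 := by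
          rw [Finset.card_insert_of_notMem (by
              simp only [Finset.mem_image, Finset.mem_range]
              rintro ⟨r, hr, h⟩
              replace h : 2 + r * (1 + t) = i + 1 + i * t := h
              have := aux_fg (t := t) hr
              omega),
            Finset.card_image_of_injOn (fun a _ b _ h => by
              replace h : 2 + a * (1 + t) = 2 + b * (1 + t) := h
              have h2 : a * (1 + t) = b * (1 + t) := by omega
              exact Nat.eq_of_mul_eq_mul_right (by omega) h2),
            Finset.card_range]
        calc i + 1 = _ := hcard.symm
          _ ≤ _ := Finset.card_le_card hsubf
      omega
  refine ⟨partA, ?_⟩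
  intro u hu
  obtain ⟨huM, hnu, hshad⟩ := hu
  rw [M, Finset.mem_filter, Finset.mem_powerset] at huM
  obtain ⟨husub, hucard, huspr⟩ := huM
  have huspread : tSpread n t u := ⟨fun x hx => Finset.mem_Icc.mp (husub hx), huspr⟩
  by_cases heq : omegaMon n t j = u
  · exact Or.inl heq
  right
  classical
  set D := (omegaMon n t j \ u) ∪ (u \ omegaMon n t j) with hD
  have hDne : D.Nonempty := by
    rw [Finset.nonempty_iff_ne_empty]
    intro h
    rw [hD, Finset.union_eq_empty] at h
    exact heq (Finset.Subset.antisymm (Finset.sdiff_eq_empty_iff_subset.mp h.1)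
      (Finset.sdiff_eq_empty_iff_subset.mp h.2))
  set m := Finset.min' D hDne with hm
  have hmD : m ∈ D := Finset.min'_mem D hDne
  have hagree : ∀ x, x < m → (x ∈ omegaMon n t j ↔ x ∈ u) := by
    intro x hx
    have hxD : x ∉ D := fun hxD => absurd (Finset.min'_le D x hxD) (by omega)
    rw [hD, Finset.mem_union, Finset.mem_sdiff, Finset.mem_sdiff] at hxD
    push_neg at hxD
    exact ⟨hxD.1, hxD.2⟩
  by_cases hmo : m ∈ omegaMon n t j
  · have hmu : m ∉ u := by
      intro h
      rw [hD, Finset.mem_union, Finset.mem_sdiff, Finset.mem_sdiff] at hmD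
      tauto
    exact ⟨m, hmo, hmu, hagree⟩
  exfalso
  have hmu : m ∈ u := by
    rw [hD, Finset.mem_union, Finset.mem_sdiff, Finset.mem_sdiff] at hmD
    tauto
  have hm1 : 1 ≤ m ∧ m ≤ n := Finset.mem_Icc.mp (husub hmu)
  have hmn : m < n := by
    rcases eq_or_lt_of_le hm1.2 with h | h
    · exact absurd (h ▸ (mem_omegaMon hj1).mpr (Or.inr (Or.inr rfl))) hmo
    · exact h
  by_cases hm2 : m = 1
  · have h1u : (1 : ℕ) ∈ u := hm2 ▸ hmu
    have hw0 : omegaMon n t 0 = {1, n} := by rw [omegaMon, if_pos rfl]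
    have hsub0 : omegaMon n t 0 ⊆ u := by
      rw [hw0]
      intro x hx
      rcases Finset.mem_insert.mp hx with rfl | hx
      · exact h1u
      · rw [Finset.mem_singleton] at hx
        subst hx
        exact hnu
    have hcard0 : (omegaMon n t 0).card = 2 := by
      rw [hw0, Finset.card_insert_of_notMem (by simp; omega), Finset.card_singleton]
    exact hshad 0 (by omega)
      (mem_shad_iter (j - 0) _ _ u huspread hsub0 Relation.ReflTransGen.refl (by omega))
  · have hmg : m ≠ j + 1 + j * t := fun h => hmo ((mem_omegaMon hj1).mpr (Or.inr (Or.inl h)))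
    have hmfr : ∀ r, r < j → m ≠ 2 + r * (1 + t) := fun r hr h =>
      hmo ((mem_omegaMon hj1).mpr (Or.inl ⟨r, hr, h.symm⟩))
    rcases lt_or_gt_of_ne hmg with hmlt | hmgt
    · -- m < j + 1 + j*t
      have hm2' : 2 < m := by
        rcases Nat.lt_or_ge m 3 with h | h
        · exfalso
          exact hmfr 0 (by omega) (by omega)
        · omega
      have hjx : m ≤ 2 + j * (1 + t) := by
        have : j * (1 + t) = j + j * t := by ring
        omega
      have hexx : ∃ r, m ≤ 2 + r * (1 + t) := ⟨j, hjx⟩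
      obtain ⟨s, hsj, hs_spec, hs_min⟩ :
          ∃ s, s ≤ j ∧ m ≤ 2 + s * (1 + t) ∧ ∀ r, r < s → 2 + r * (1 + t) < m :=
        ⟨Nat.find hexx, Nat.find_le hjx, Nat.find_spec hexx, fun r hr => by
          have := Nat.find_min hexx hr
          omega⟩
      have hs_pos : 1 ≤ s := by
        by_contra h
        have h0 : s = 0 := by omega
        rw [h0] at hs_spec
        omega
      obtain ⟨s', rfl⟩ : ∃ s', s = s' + 1 := ⟨s - 1, by omega⟩
      have hfu : ∀ r, r < s' + 1 → 2 + r * (1 + t) ∈ u := fun r hr =>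
        (hagree _ (hs_min r hr)).mp ((mem_omegaMon hj1).mpr (Or.inl ⟨r, by omega, rfl⟩))
      have hlow : 2 + s' * (1 + t) + t ≤ m :=
        huspr _ (hfu s' (by omega)) m hmu (hs_min s' (by omega))
      have hsj' : s' + 1 < j := by
        by_contra h
        have heqj : s' + 1 = j := by omega
        have e1 : j * t = s' * t + t := by rw [← heqj]; ring
        have e2 : s' * (1 + t) = s' + s' * t := by ring
        omega
      have hm_ne : m ≠ 2 + (s' + 1) * (1 + t) := hmfr (s' + 1) hsj'
      have e3 : (s' + 1) * (1 + t) = s' * (1 + t) + 1 + t := by ring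
      have hm_eq : m = 2 + s' * (1 + t) + t := by omega
      have hsubs : omegaMon n t (s' + 1) ⊆ u := by
        intro x hx
        rcases (mem_omegaMon (by omega)).mp hx with ⟨r, hr, rfl⟩ | rfl | rfl
        · exact hfu r hr
        · have hx2 : s' + 1 + 1 + (s' + 1) * t = m := by
            have e2 : s' * (1 + t) = s' + s' * t := by ring
            have e4 : (s' + 1) * t = s' * t + t := by ring
            omega
          rw [hx2]
          exact hmu
        · exact hnu
      have hn_s : (s' + 1 + 1) * (1 + t) ≤ n :=
        le_trans (Nat.mul_le_mul_right _ (by omega)) hn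
      have hcards : (omegaMon n t (s' + 1)).card = s' + 3 := omegaMon_card ht1 (by omega) hn_s
      exact hshad (s' + 1) hsj'
        (mem_shad_iter (j - (s' + 1)) _ _ u huspread hsubs Relation.ReflTransGen.refl (by omega))
    · -- j + 1 + j*t < m
      have hsubm : insert m (omegaMon n t j) ⊆ u := by
        intro x hx
        rcases Finset.mem_insert.mp hx with rfl | hx
        · exact hmu
        · rcases (mem_omegaMon hj1).mp hx with ⟨r, hr, h⟩ | h | h
          · have := aux_fg (t := t) hr
            exact (hagree _ (by omega)).mp hx
          · exact (hagree _ (by omega)).mp hx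
          · subst h
            exact hnu
      have hle := Finset.card_le_card hsubm
      rw [Finset.card_insert_of_notMem hmo, omegaMon_card ht1 hj1 hn] at hle
      omega
end

section
/- Let t, d, k be integers with t ≥ 2, 1 ≤ d ≤ t, k ≥ 3, and set n = d + kt. Let K be a field and let I be a t-spread strongly stable ideal of K[x_1,…,x_n] such that indeg I = 2, I has a corner of the form (k_1, 2) for some k_1 ≥ 1, and every corner of I has value 1. Then the number of corners of I satisfies |Corn(I)| ≤ k + ⌊(d−3)/t⌋, which equals k−1 if d ∈ {1,2} and equals k if 3 ≤ d ≤ t. -/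
open Finset

/-! ### Auxiliary lemmas -/

section Aux

open MvPolynomial

variable {K : Type*} [Field K]

/-- The exponent vector of a squarefree support. -/
noncomputable def indf (u : Finset ℕ) : ℕ →₀ ℕ := ∑ i ∈ u, Finsupp.single i 1

lemma indf_apply (u : Finset ℕ) (j : ℕ) : indf u j = if j ∈ u then 1 else 0 := by
  classical
  rw [indf, Finsupp.finset_sum_apply]
  simp [Finsupp.single_apply]

lemma sqmon_eq_monomial (u : Finset ℕ) :
    sqmon K u = monomial (indf u) (1 : K) := by
  classical
  induction u using Finset.induction_on with
  | empty => simp [sqmon, indf]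
  | @insert a s ha ih =>
      have hX : (X a : MvPolynomial ℕ K) = monomial (Finsupp.single a 1) 1 := rfl
      have hsum : indf (insert a s) = Finsupp.single a 1 + indf s := by
        rw [indf, indf, Finset.sum_insert ha]
      rw [sqmon, Finset.prod_insert ha, show (∏ i ∈ s, (X i : MvPolynomial ℕ K)) = sqmon K s
        from rfl, ih, hsum, hX, monomial_mul, one_mul]

lemma sqmon_support (u : Finset ℕ) : (sqmon K u).support = {indf u} := by
  classical
  rw [sqmon_eq_monomial, support_monomial, if_neg (one_ne_zero)]

lemma span_support_le {G : Set (Finset ℕ)} {p : MvPolynomial ℕ K}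
    (hp : p ∈ Ideal.span (sqmon K '' G)) :
    ∀ μ ∈ p.support, ∃ g ∈ G, indf g ≤ μ := by
  classical
  refine Submodule.span_induction
    (p := fun x _ => ∀ μ ∈ x.support, ∃ g ∈ G, indf g ≤ μ) ?_ ?_ ?_ ?_ hp
  · rintro x ⟨g, hg, rfl⟩ μ hμ
    rw [sqmon_support, Finset.mem_singleton] at hμ
    exact ⟨g, hg, hμ ▸ le_refl _⟩
  · intro μ hμ; simp at hμ
  · intro x y _ _ ihx ihy μ hμ
    rcases Finset.mem_union.mp (MvPolynomial.support_add hμ) with h | h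
    exacts [ihx μ h, ihy μ h]
  · intro a x _ ih μ hμ
    rw [smul_eq_mul] at hμ
    obtain ⟨α, hα, β, hβ, rfl⟩ := Finset.mem_add.mp (MvPolynomial.support_mul a x hμ)
    obtain ⟨g, hg, hle⟩ := ih β hβ
    exact ⟨g, hg, le_trans hle le_add_self⟩

lemma exists_gen_subset {G : Set (Finset ℕ)} {w : Finset ℕ}
    (hw : sqmon K w ∈ Ideal.span (sqmon K '' G)) : ∃ g ∈ G, g ⊆ w := by
  obtain ⟨g, hg, hle⟩ := span_support_le hw (indf w)
    (by rw [sqmon_support]; exact Finset.mem_singleton_self _)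
  refine ⟨g, hg, fun i hi => ?_⟩
  have h1 := (Finsupp.le_def.mp hle) i
  rw [indf_apply, indf_apply, if_pos hi] at h1
  by_contra hni
  rw [if_neg hni] at h1
  omega

lemma sqmon_mem_of_subset {I : Ideal (MvPolynomial ℕ K)} {g w : Finset ℕ}
    (hgw : g ⊆ w) (hg : sqmon K g ∈ I) : sqmon K w ∈ I := by
  have h : sqmon K w = sqmon K (w \ g) * sqmon K g := by
    rw [sqmon, sqmon, sqmon, Finset.prod_sdiff hgw]
  rw [h]
  exact Ideal.mul_mem_left _ _ hg

lemma minGens_tSpread {n t : ℕ} {I : Ideal (MvPolynomial ℕ K)} (hI : IsTSS K n t I)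
    {w : Finset ℕ} (hw : w ∈ minGens K I) : tSpread n t w := by
  obtain ⟨⟨G, hG, hspan⟩, _⟩ := hI
  obtain ⟨g, hgG, hgw⟩ := exists_gen_subset (hspan ▸ hw.1)
  rcases eq_or_ne g w with rfl | hne
  · exact hG _ hgG
  · have hginI : sqmon K g ∈ I := hspan ▸ Ideal.subset_span ⟨g, hgG, rfl⟩
    exact absurd hginI (hw.2 g (Finset.ssubset_iff_subset_ne.mpr ⟨hgw, hne⟩))

lemma fmax_le {u : Finset ℕ} {m : ℕ} (h : ∀ x ∈ u, x ≤ m) : fmax u ≤ m :=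
  Finset.sup_le h

lemma le_fmax {u : Finset ℕ} {x : ℕ} (h : x ∈ u) : x ≤ fmax u :=
  Finset.le_sup (f := id) h

lemma spread_bound_s14 {n t : ℕ} {u : Finset ℕ} (hu : tSpread n t u) :
    ∀ c, ∀ a ∈ u, (u.filter (fun x => a < x)).card = c → a + t * c ≤ n := by
  intro c
  induction c with
  | zero =>
      intro a ha _
      have h := (hu.1 a ha).2
      simpa using h
  | succ c ih =>
      intro a ha hc
      have hne : (u.filter (fun x => a < x)).Nonempty := Finset.card_pos.mp (by omega)
      set b := (u.filter (fun x => a < x)).min' hne with hbdef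
      have hbmem : b ∈ u.filter (fun x => a < x) := Finset.min'_mem _ hne
      have hbu : b ∈ u := (Finset.mem_filter.mp hbmem).1
      have hab : a < b := (Finset.mem_filter.mp hbmem).2
      have habt : a + t ≤ b := hu.2 a ha b hbu hab
      have hfil : u.filter (fun x => b < x) = (u.filter (fun x => a < x)).erase b := by
        ext x
        simp only [Finset.mem_filter, Finset.mem_erase]
        constructor
        · rintro ⟨hx, hbx⟩
          exact ⟨by omega, hx, by omega⟩
        · rintro ⟨hxb, hx, hax⟩
          have hmin := Finset.min'_le (u.filter (fun x => a < x)) x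
            (Finset.mem_filter.mpr ⟨hx, hax⟩)
          rw [← hbdef] at hmin
          exact ⟨hx, by omega⟩
      have hcard : (u.filter (fun x => b < x)).card = c := by
        rw [hfil, Finset.card_erase_of_mem hbmem, hc]
        omega
      have hb := ih b hbu hcard
      calc a + t * (c + 1) = (a + t) + t * c := by ring
        _ ≤ b + t * c := Nat.add_le_add_right habt _
        _ ≤ n := hb

lemma three_smallest {n t : ℕ} {u : Finset ℕ} (hu : tSpread n t u) (hcard : 3 ≤ u.card) :
    ∃ a b c, a ∈ u ∧ b ∈ u ∧ c ∈ u ∧ a < b ∧ b < c ∧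
      a + t * (u.card - 1) ≤ n ∧ b + t * (u.card - 2) ≤ n ∧ c + t * (u.card - 3) ≤ n := by
  classical
  have h0 : u.Nonempty := Finset.card_pos.mp (by omega)
  set a := u.min' h0 with hadef
  have ha : a ∈ u := u.min'_mem h0
  have h1 : (u.erase a).Nonempty := by
    rw [← Finset.card_pos, Finset.card_erase_of_mem ha]; omega
  set b := (u.erase a).min' h1 with hbdef
  have hb' : b ∈ u.erase a := Finset.min'_mem _ h1
  have hb : b ∈ u := Finset.mem_of_mem_erase hb'
  have hab : a < b := lt_of_le_of_ne (u.min'_le b hb) (Ne.symm (Finset.ne_of_mem_erase hb'))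
  have h2 : ((u.erase a).erase b).Nonempty := by
    rw [← Finset.card_pos, Finset.card_erase_of_mem hb', Finset.card_erase_of_mem ha]; omega
  set c := ((u.erase a).erase b).min' h2 with hcdef
  have hc' : c ∈ (u.erase a).erase b := Finset.min'_mem _ h2
  have hc : c ∈ u := Finset.mem_of_mem_erase (Finset.mem_of_mem_erase hc')
  have hbc : b < c := lt_of_le_of_ne ((u.erase a).min'_le c (Finset.mem_of_mem_erase hc'))
      (Ne.symm (Finset.ne_of_mem_erase hc'))
  have hf1 : u.filter (fun x => a < x) = u.erase a := by
    ext x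
    simp only [Finset.mem_filter, Finset.mem_erase]
    constructor
    · rintro ⟨hx, h⟩; exact ⟨by omega, hx⟩
    · rintro ⟨hne, hx⟩
      exact ⟨hx, lt_of_le_of_ne (u.min'_le x hx) (Ne.symm hne)⟩
  have hf2 : u.filter (fun x => b < x) = (u.erase a).erase b := by
    ext x
    simp only [Finset.mem_filter, Finset.mem_erase]
    constructor
    · rintro ⟨hx, h⟩; exact ⟨by omega, by omega, hx⟩
    · rintro ⟨hneb, hnea, hx⟩
      have : b ≤ x := (u.erase a).min'_le x (Finset.mem_erase.mpr ⟨hnea, hx⟩)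
      exact ⟨hx, by omega⟩
  have hf3 : u.filter (fun x => c < x) = ((u.erase a).erase b).erase c := by
    ext x
    simp only [Finset.mem_filter, Finset.mem_erase]
    constructor
    · rintro ⟨hx, h⟩; exact ⟨by omega, by omega, by omega, hx⟩
    · rintro ⟨hnec, hneb, hnea, hx⟩
      have : c ≤ x := ((u.erase a).erase b).min'_le x
        (Finset.mem_erase.mpr ⟨hneb, Finset.mem_erase.mpr ⟨hnea, hx⟩⟩)
      exact ⟨hx, by omega⟩
  have B1 := spread_bound_s14 hu (u.card - 1) a ha
    (by rw [hf1, Finset.card_erase_of_mem ha])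
  have B2 := spread_bound_s14 hu (u.card - 2) b hb
    (by rw [hf2, Finset.card_erase_of_mem hb', Finset.card_erase_of_mem ha]; omega)
  have B3 := spread_bound_s14 hu (u.card - 3) c hc
    (by rw [hf3, Finset.card_erase_of_mem hc', Finset.card_erase_of_mem hb',
          Finset.card_erase_of_mem ha]; omega)
  exact ⟨a, b, c, ha, hb, hc, hab, hbc, B1, B2, B3⟩

lemma tSpread_pair {n t x y : ℕ} (h1 : 1 ≤ x) (h2 : x + t ≤ y) (h3 : y ≤ n) :
    tSpread n t ({x, y} : Finset ℕ) := by
  constructor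
  · intro i hi
    simp only [Finset.mem_insert, Finset.mem_singleton] at hi
    rcases hi with rfl | rfl <;> omega
  · intro i hi j hj hij
    simp only [Finset.mem_insert, Finset.mem_singleton] at hi hj
    rcases hi with rfl | rfl <;> rcases hj with rfl | rfl <;> omega

lemma tSpread_triple {n t x y z : ℕ} (h1 : 1 ≤ x) (h2 : x + t ≤ y) (h3 : y + t ≤ z)
    (h4 : z ≤ n) : tSpread n t ({x, y, z} : Finset ℕ) := by
  constructor
  · intro i hi
    simp only [Finset.mem_insert, Finset.mem_singleton] at hi
    rcases hi with rfl | rfl | rfl <;> omega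
  · intro i hi j hj hij
    simp only [Finset.mem_insert, Finset.mem_singleton] at hi hj
    rcases hi with rfl | rfl | rfl <;> rcases hj with rfl | rfl | rfl <;> omega

lemma ss_move {n t : ℕ} {I : Ideal (MvPolynomial ℕ K)} (hI : IsTSS K n t I)
    {u : Finset ℕ} (hu : tSpread n t u) (hmem : sqmon K u ∈ I)
    {j i : ℕ} (hj : j ∈ u) (hi1 : 1 ≤ i) (hij : i < j) (hiu : i ∉ u)
    {v : Finset ℕ} (hv : insert i (u.erase j) = v) (hsp : tSpread n t v) :
    sqmon K v ∈ I := by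
  have h := hI.2 u hu hmem j hj i hi1 hij hiu (by rw [hv]; exact hsp)
  rwa [hv] at h

/-- The family `{x_1 x_b : t+1 ≤ b ≤ k₁+t+1}` lies in `I`, given a minimal generator of
degree 2 with maximum `k₁ + t + 1`. -/
lemma pair_family {n t k₁ : ℕ} {I : Ideal (MvPolynomial ℕ K)} (hI : IsTSS K n t I)
    (ht : 1 ≤ t) (hk₁ : 1 ≤ k₁)
    (hu2 : ∃ u ∈ minGens K I, u.card = 2 ∧ fmax u = k₁ + t + 1) :
    ∀ b, 1 + t ≤ b → b ≤ k₁ + t + 1 → sqmon K ({1, b} : Finset ℕ) ∈ I := by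
  classical
  obtain ⟨u, hu, hcard, hmax⟩ := hu2
  have hsp := minGens_tSpread hI hu
  have hne : u.Nonempty := Finset.card_pos.mp (by omega)
  set a := u.min' hne with hadef
  set m := u.max' hne with hmdef
  have ham : a < m := Finset.min'_lt_max'_of_card u (by omega)
  have hamem : a ∈ u := u.min'_mem hne
  have hmmem : m ∈ u := u.max'_mem hne
  have hueq : ({a, m} : Finset ℕ) = u := by
    apply Finset.eq_of_subset_of_card_le
    · intro p hp
      simp only [Finset.mem_insert, Finset.mem_singleton] at hp
      rcases hp with rfl | rfl
      exacts [hamem, hmmem]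
    · rw [hcard, Finset.card_pair (by omega)]
  have hfm : fmax u = m :=
    le_antisymm (fmax_le fun x hx => Finset.le_max' u x hx) (le_fmax hmmem)
  have hmval : m = k₁ + t + 1 := by rw [← hfm, hmax]
  have hat : a + t ≤ m := hsp.2 a hamem m hmmem ham
  have ha1 : 1 ≤ a := (hsp.1 a hamem).1
  have hmn : m ≤ n := (hsp.1 m hmmem).2
  -- step 1 : x_1 x_m ∈ I
  have step1 : sqmon K ({1, m} : Finset ℕ) ∈ I := by
    rcases eq_or_lt_of_le ha1 with heq | hlt
    · have : ({1, m} : Finset ℕ) = u := by rw [← hueq, ← heq]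
      rw [this]; exact hu.1
    · -- move a → 1
      refine ss_move hI (u := u) hsp hu.1 hamem (i := 1) le_rfl hlt ?_ ?_
        (tSpread_pair le_rfl (by omega) hmn)
      · rw [← hueq]
        simp only [Finset.mem_insert, Finset.mem_singleton]
        omega
      · rw [← hueq]
        have her : ({a, m} : Finset ℕ).erase a = {m} := by
          ext p
          simp only [Finset.mem_erase, Finset.mem_insert, Finset.mem_singleton]
          omega
        rw [her]
  -- step 2 : x_1 x_b ∈ I
  intro b hb1 hb2
  rcases eq_or_lt_of_le (show b ≤ m by omega) with heq | hlt
  · rw [heq]; exact step1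
  · refine ss_move hI (u := ({1, m} : Finset ℕ)) (tSpread_pair le_rfl (by omega) hmn) step1
      (j := m) (by simp) (by omega) hlt ?_ ?_ (tSpread_pair le_rfl hb1 (by omega))
    · simp only [Finset.mem_insert, Finset.mem_singleton]
      omega
    · have her : ({1, m} : Finset ℕ).erase m = {1} := by
        ext p
        simp only [Finset.mem_erase, Finset.mem_insert, Finset.mem_singleton]
        omega
      rw [her]
      exact Finset.pair_comm b 1

/-- The key contradiction: if `n = 2 + kt`, a corner in degree 2 exists, and `I` has minimal
generators of degrees `3` and `k+1`, we reach a contradiction. -/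
lemma main_contra {t k k₁ : ℕ} {I : Ideal (MvPolynomial ℕ K)}
    (ht : 2 ≤ t) (hk : 3 ≤ k) (hI : IsTSS K (2 + k * t) t I) (hk₁ : 1 ≤ k₁)
    (hu2 : ∃ u ∈ minGens K I, u.card = 2 ∧ fmax u = k₁ + t + 1)
    (h3bound : ∀ w ∈ minGens K I, w.card = 3 → fmax w ≤ k₁ + t + t)
    (hw3 : ∃ w ∈ minGens K I, w.card = 3)
    (hbig : ∃ u ∈ minGens K I, u.card = k + 1) : False := by
  classical
  have hpair := pair_family hI (by omega) hk₁ hu2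
  -- Part 1 : x_2 x_{2+t} x_{2+2t} ∉ I
  have hA : sqmon K ({2, 2 + t, 2 + t + t} : Finset ℕ) ∉ I := by
    obtain ⟨u, huG, hucard⟩ := hbig
    have husp := minGens_tSpread hI huG
    obtain ⟨a, b, c, ha, hb, hc, hab, hbc, B1, B2, B3⟩ := three_smallest husp (by omega)
    rw [hucard] at B1 B2 B3
    have e1 : k + 1 - 1 = k := by omega
    have e2 : k + 1 - 2 = k - 1 := by omega
    have e3 : k + 1 - 3 = k - 2 := by omega
    rw [e1] at B1; rw [e2] at B2; rw [e3] at B3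
    have hmul0 : t * k = t * (k - 2) + t + t := by
      have h2 : k = (k - 2) + 2 := by omega
      calc t * k = t * ((k - 2) + 2) := by rw [← h2]
        _ = t * (k - 2) + t + t := by ring
    have hmul1 : t * (k - 1) = t * (k - 2) + t := by
      have h1 : k - 1 = (k - 2) + 1 := by omega
      rw [h1]; ring
    have ha2 : a ≤ 2 := by
      refine Nat.le_of_add_le_add_right (b := t * k) (c := 2) ?_
      calc a + t * k ≤ 2 + k * t := B1
        _ = 2 + t * k := by rw [Nat.mul_comm]
    have hb2 : b ≤ 2 + t := by
      refine Nat.le_of_add_le_add_right (b := t * (k - 1)) (c := 2 + t) ?_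
      calc b + t * (k - 1) ≤ 2 + k * t := B2
        _ = 2 + (t * (k - 1) + t) := by rw [Nat.mul_comm k t, hmul0, hmul1]
        _ = (2 + t) + t * (k - 1) := by ring
    have hc2 : c ≤ 2 + t + t := by
      refine Nat.le_of_add_le_add_right (b := t * (k - 2)) (c := 2 + t + t) ?_
      calc c + t * (k - 2) ≤ 2 + k * t := B3
        _ = 2 + (t * (k - 2) + t + t) := by rw [Nat.mul_comm k t, hmul0]
        _ = (2 + t + t) + t * (k - 2) := by ring
    have ha1 : 1 ≤ a := (husp.1 a ha).1
    have huab : a + t ≤ b := husp.2 a ha b hb hab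
    have hubc : b + t ≤ c := husp.2 b hb c hc hbc
    by_cases hA1 : a = 1
    · -- {1, b} ⊆ u is in I : contradiction with minimality of u
      exfalso
      have hmem : sqmon K ({1, b} : Finset ℕ) ∈ I := hpair b (by omega) (by omega)
      have hsub : ({1, b} : Finset ℕ) ⊆ u := by
        intro p hp
        simp only [Finset.mem_insert, Finset.mem_singleton] at hp
        rcases hp with rfl | rfl
        · exact hA1 ▸ ha
        · exact hb
      have hss : ({1, b} : Finset ℕ) ⊂ u :=
        (Finset.ssubset_iff_of_subset hsub).mpr
          ⟨c, hc, by simp only [Finset.mem_insert, Finset.mem_singleton]; omega⟩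
      exact huG.2 _ hss hmem
    · intro hmem
      have ha2' : a = 2 := by omega
      have hb2' : b = 2 + t := by omega
      have hc2' : c = 2 + t + t := by omega
      have hsub : ({2, 2 + t, 2 + t + t} : Finset ℕ) ⊆ u := by
        intro p hp
        simp only [Finset.mem_insert, Finset.mem_singleton] at hp
        rcases hp with rfl | rfl | rfl
        · exact ha2' ▸ ha
        · exact hb2' ▸ hb
        · exact hc2' ▸ hc
      have hAcard : ({2, 2 + t, 2 + t + t} : Finset ℕ).card ≤ 3 := by
        calc ({2, 2 + t, 2 + t + t} : Finset ℕ).card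
            ≤ ({2 + t, 2 + t + t} : Finset ℕ).card + 1 := Finset.card_insert_le _ _
          _ ≤ (({2 + t + t} : Finset ℕ).card + 1) + 1 :=
              Nat.add_le_add_right (Finset.card_insert_le _ _) 1
          _ = 3 := by simp
      have hss : ({2, 2 + t, 2 + t + t} : Finset ℕ) ⊂ u := by
        refine Finset.ssubset_iff_subset_ne.mpr ⟨hsub, fun h => ?_⟩
        rw [h] at hAcard
        omega
      exact huG.2 _ hss hmem
  -- Part 2 : the degree-3 minimal generator
  obtain ⟨w, hwG, hwcard⟩ := hw3
  have hwsp := minGens_tSpread hI hwG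
  obtain ⟨x, y, z, hx, hy, hz, hxy, hyz, _, _, _⟩ := three_smallest hwsp (by omega)
  have hweq : ({x, y, z} : Finset ℕ) = w := by
    apply Finset.eq_of_subset_of_card_le
    · intro p hp
      simp only [Finset.mem_insert, Finset.mem_singleton] at hp
      rcases hp with rfl | rfl | rfl <;> assumption
    · rw [hwcard]
      rw [Finset.card_eq_three.mpr ⟨x, y, z, by omega, by omega, by omega, rfl⟩]
  have hfmaxw : fmax w = z := by
    refine le_antisymm (fmax_le fun p hp => ?_) (le_fmax (by rw [← hweq]; simp))
    rw [← hweq] at hp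
    simp only [Finset.mem_insert, Finset.mem_singleton] at hp
    omega
  have hzb : z ≤ k₁ + t + t := by
    have h := h3bound w hwG hwcard
    rw [hfmaxw] at h
    exact h
  have hxyt : x + t ≤ y := hwsp.2 x hx y hy hxy
  have hyzt : y + t ≤ z := hwsp.2 y hy z hz hyz
  have hx1 : 1 ≤ x := (hwsp.1 x hx).1
  have hzn : z ≤ 2 + k * t := (hwsp.1 z hz).2
  by_cases hxe : x = 1
  · -- {1, y} ∈ I, proper subset of w
    have hmem : sqmon K ({1, y} : Finset ℕ) ∈ I := hpair y (by omega) (by omega)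
    have hsub : ({1, y} : Finset ℕ) ⊆ w := by
      intro p hp
      simp only [Finset.mem_insert, Finset.mem_singleton] at hp
      rcases hp with rfl | rfl
      · exact hweq ▸ (hxe ▸ (by simp : x ∈ ({x, y, z} : Finset ℕ)))
      · exact hy
    have hss : ({1, y} : Finset ℕ) ⊂ w :=
      (Finset.ssubset_iff_of_subset hsub).mpr
        ⟨z, hz, by simp only [Finset.mem_insert, Finset.mem_singleton]; omega⟩
    exact hwG.2 _ hss hmem
  · -- x ≥ 2 : compress w down to {2, 2+t, 2+2t}
    have hx2 : 2 ≤ x := by omega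
    have M0 : sqmon K ({x, y, z} : Finset ℕ) ∈ I := by rw [hweq]; exact hwG.1
    have hspxyz : tSpread (2 + k * t) t ({x, y, z} : Finset ℕ) :=
      tSpread_triple hx1 hxyt hyzt hzn
    have M1 : sqmon K ({2, y, z} : Finset ℕ) ∈ I := by
      rcases eq_or_lt_of_le hx2 with heq | hlt
      · rw [heq]; exact M0
      · refine ss_move hI hspxyz M0 (j := x) (by simp) (i := 2) (by omega) hlt ?_ ?_
          (tSpread_triple (by omega) (by omega) hyzt hzn)
        · simp only [Finset.mem_insert, Finset.mem_singleton]; omega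
        · ext p
          simp only [Finset.mem_insert, Finset.mem_erase, Finset.mem_singleton]
          omega
    have hsp2yz : tSpread (2 + k * t) t ({2, y, z} : Finset ℕ) :=
      tSpread_triple (by omega) (by omega) hyzt hzn
    have h2ty : 2 + t ≤ y := by omega
    have M2 : sqmon K ({2, 2 + t, z} : Finset ℕ) ∈ I := by
      rcases eq_or_lt_of_le h2ty with heq | hlt
      · rw [heq]; exact M1
      · refine ss_move hI hsp2yz M1 (j := y) (by simp) (i := 2 + t) (by omega) hlt ?_ ?_
          (tSpread_triple (by omega) (by omega) (by omega) hzn)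
        · simp only [Finset.mem_insert, Finset.mem_singleton]; omega
        · ext p
          simp only [Finset.mem_insert, Finset.mem_erase, Finset.mem_singleton]
          omega
    have hsp22z : tSpread (2 + k * t) t ({2, 2 + t, z} : Finset ℕ) :=
      tSpread_triple (by omega) (by omega) (by omega) hzn
    have h2tz : 2 + t + t ≤ z := by omega
    have M3 : sqmon K ({2, 2 + t, 2 + t + t} : Finset ℕ) ∈ I := by
      rcases eq_or_lt_of_le h2tz with heq | hlt
      · rw [heq]; exact M2
      · refine ss_move hI hsp22z M2 (j := z) (by simp) (i := 2 + t + t) (by omega) hlt ?_ ?_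
          (tSpread_triple (by omega) (by omega) (by omega) (by omega))
        · simp only [Finset.mem_insert, Finset.mem_singleton]; omega
        · ext p
          simp only [Finset.mem_insert, Finset.mem_erase, Finset.mem_singleton]
          omega
    exact hA M3

lemma corner_ell_ge_two {t : ℕ} {I : Ideal (MvPolynomial ℕ K)} (hindeg : indeg K I = 2)
    {k ℓ : ℕ} (hc : IsIdealCorner K t I k ℓ) : 2 ≤ ℓ := by
  by_contra h
  have hl1 : ℓ = 1 := by have := hc.2.1; omega
  obtain ⟨u, huG, hcard, _⟩ := hc.2.2.1
  rw [hl1] at hcard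
  obtain ⟨i, rfl⟩ := Finset.card_eq_one.mp hcard
  have hX : sqmon K ({i} : Finset ℕ) = X i := by rw [sqmon, Finset.prod_singleton]
  have hmem : (X i : MvPolynomial ℕ K) ∈ I := hX ▸ huG.1
  have h1 : (1 : ℕ) ∈ {d | ∃ p ∈ I, p ≠ 0 ∧ MvPolynomial.IsHomogeneous p d} :=
    ⟨X i, hmem, MvPolynomial.X_ne_zero i, MvPolynomial.isHomogeneous_X _ _⟩
  have h2 : indeg K I ≤ 1 := Nat.sInf_le h1
  omega

lemma corner_bound {n t : ℕ} {I : Ideal (MvPolynomial ℕ K)} (hI : IsTSS K n t I)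
    {k ℓ : ℕ} (hc : IsIdealCorner K t I k ℓ) : k + t * (ℓ - 1) + 1 ≤ n := by
  obtain ⟨u, huG, hcard, hfm⟩ := hc.2.2.1
  have hsp := minGens_tSpread hI huG
  have hne : u.Nonempty := Finset.card_pos.mp (by rw [hcard]; exact hc.2.1)
  obtain ⟨i, hi, hieq⟩ := Finset.exists_mem_eq_sup u hne id
  have h1 : fmax u ≤ n := by
    have : u.sup id ≤ n := by rw [hieq]; exact (hsp.1 i hi).2
    exact this
  rw [hfm] at h1
  exact h1

end Aux

/-- a `t`-spread strongly stable ideal of initial degree `2`, with a corner in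
degree `2` and all corner values `1`, has at most `k + ⌊(d-3)/t⌋` corners. -/
theorem stmt14 (t d k : ℕ) (ht : 2 ≤ t) (hd1 : 1 ≤ d) (hdt : d ≤ t) (hk : 3 ≤ k)
    (K : Type*) [Field K] (I : Ideal (MvPolynomial ℕ K))
    (hI : IsTSS K (d + k * t) t I) (hindeg : indeg K I = 2)
    (hcorn2 : ∃ k1, 1 ≤ k1 ∧ IsIdealCorner K t I k1 2)
    (hval : ∀ p ∈ Corn K t I, cornValue K t I p.1 p.2 = 1) :
    (Corn K t I).Finite ∧
    ((Corn K t I).ncard : ℤ) ≤ (k : ℤ) + Int.fdiv ((d : ℤ) - 3) (t : ℤ) ∧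
    (d ≤ 2 → (k : ℤ) + Int.fdiv ((d : ℤ) - 3) (t : ℤ) = (k : ℤ) - 1) ∧
    (3 ≤ d → (k : ℤ) + Int.fdiv ((d : ℤ) - 3) (t : ℤ) = (k : ℤ)) := by
  classical
  -- arithmetic facts about `fdiv`
  have hfdneg : d ≤ 2 → Int.fdiv ((d : ℤ) - 3) (t : ℤ) = -1 := by
    intro hd2
    rw [Int.fdiv_eq_ediv_of_nonneg _ (by omega : (0 : ℤ) ≤ (t : ℤ))]
    have h3 : (d : ℤ) - 3 = ((d : ℤ) - 3 + t) + (-1) * t := by ring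
    rw [h3, Int.add_mul_ediv_right _ _ (by omega : (t : ℤ) ≠ 0),
      Int.ediv_eq_zero_of_lt (by omega) (by omega)]
    omega
  have hfd0 : 3 ≤ d → Int.fdiv ((d : ℤ) - 3) (t : ℤ) = 0 := by
    intro hd3
    rw [Int.fdiv_eq_ediv_of_nonneg _ (by omega : (0 : ℤ) ≤ (t : ℤ))]
    exact Int.ediv_eq_zero_of_lt (by omega) (by omega)
  obtain ⟨k₁, hk₁, hc2⟩ := hcorn2
  set S := Corn K t I with hSdef
  have hcornOf : ∀ p ∈ S, IsIdealCorner K t I p.1 p.2 := fun p hp => hp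
  have hℓge : ∀ p ∈ S, 2 ≤ p.2 := fun p hp => corner_ell_ge_two hindeg (hcornOf p hp)
  have hfle : ∀ p ∈ S, p.1 + t * (p.2 - 1) + 1 ≤ d + k * t :=
    fun p hp => corner_bound hI (hcornOf p hp)
  have hℓle : ∀ p ∈ S, p.2 ≤ k + 1 := by
    intro p hp
    by_contra h
    have h1 := hfle p hp
    have hp1 : 1 ≤ p.1 := (hcornOf p hp).1
    obtain ⟨q, hq⟩ : ∃ q, t * (p.2 - 1) = q := ⟨_, rfl⟩
    obtain ⟨r, hr⟩ : ∃ r, k * t = r := ⟨_, rfl⟩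
    rw [hq, hr] at h1
    have hqr : r + t ≤ q := by
      rw [← hq, ← hr]
      calc k * t + t = t * (k + 1) := by ring
        _ ≤ t * (p.2 - 1) := Nat.mul_le_mul_left t (by omega)
    omega
  have hℓle1 : d = 1 → ∀ p ∈ S, p.2 ≤ k := by
    intro hd1' p hp
    by_contra h
    have h1 := hfle p hp
    have hp1 : 1 ≤ p.1 := (hcornOf p hp).1
    obtain ⟨q, hq⟩ : ∃ q, t * (p.2 - 1) = q := ⟨_, rfl⟩
    obtain ⟨r, hr⟩ : ∃ r, k * t = r := ⟨_, rfl⟩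
    rw [hq, hr] at h1
    have hqr : r ≤ q := by
      rw [← hq, ← hr]
      calc k * t = t * k := by ring
        _ ≤ t * (p.2 - 1) := Nat.mul_le_mul_left t (by omega)
    omega
  -- injectivity of the second projection on corners
  have hinj : Set.InjOn Prod.snd S := by
    intro p hp q hq hpq
    have hcp := hcornOf p hp
    have hcq := hcornOf q hq
    have h1 : p.1 = q.1 := by
      obtain ⟨u, huG, hucard, hufm⟩ := hcp.2.2.1
      have h2 := hcq.2.2.2.1 u huG (by rw [hucard, hpq])
      obtain ⟨v, hvG, hvcard, hvfm⟩ := hcq.2.2.1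
      have h3 := hcp.2.2.2.1 v hvG (by rw [hvcard, ← hpq])
      rw [hufm, hpq] at h2
      rw [hvfm, ← hpq] at h3
      rw [hpq] at h3
      obtain ⟨X, hX⟩ : ∃ X, t * (q.2 - 1) = X := ⟨_, rfl⟩
      rw [hX] at h2 h3
      omega
    exact Prod.ext h1 hpq
  have himg : Prod.snd '' S ⊆ ↑(Finset.Icc 2 (k + 1)) := by
    rintro x ⟨p, hp, rfl⟩
    simp only [Finset.coe_Icc, Set.mem_Icc]
    exact ⟨hℓge p hp, hℓle p hp⟩
  have hTfin : (Prod.snd '' S).Finite := (Finset.Icc 2 (k + 1)).finite_toSet.subset himg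
  have hSfin : S.Finite := Set.Finite.of_finite_image hTfin hinj
  have hcardT : (Prod.snd '' S).ncard = S.ncard := Set.ncard_image_of_injOn hinj
  have hSk : S.ncard ≤ k := by
    have h1 := Set.ncard_le_ncard himg (Finset.Icc 2 (k + 1)).finite_toSet
    rw [hcardT, Set.ncard_coe_finset, Nat.card_Icc] at h1
    omega
  -- the refined bound for d ≤ 2
  have hSk1 : d ≤ 2 → S.ncard ≤ k - 1 := by
    intro hd2
    rcases (by omega : d = 1 ∨ d = 2) with hd | hd
    · -- d = 1 : corners live in [2, k]
      have himg1 : Prod.snd '' S ⊆ ↑(Finset.Icc 2 k) := by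
        rintro x ⟨p, hp, rfl⟩
        simp only [Finset.coe_Icc, Set.mem_Icc]
        exact ⟨hℓge p hp, hℓle1 hd p hp⟩
      have h1 := Set.ncard_le_ncard himg1 (Finset.Icc 2 k).finite_toSet
      rw [hcardT, Set.ncard_coe_finset, Nat.card_Icc] at h1
      omega
    · -- d = 2 : pigeonhole + main contradiction
      by_contra hcon
      have hge : k ≤ S.ncard := by omega
      have heq : Prod.snd '' S = ↑(Finset.Icc 2 (k + 1)) := by
        refine Set.eq_of_subset_of_ncard_le himg ?_ (Finset.Icc 2 (k + 1)).finite_toSet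
        rw [hcardT, Set.ncard_coe_finset, Nat.card_Icc]
        omega
      have h3mem : (3 : ℕ) ∈ Prod.snd '' S := by
        rw [heq]
        simp only [Finset.coe_Icc, Set.mem_Icc]
        omega
      have hk1mem : (k + 1 : ℕ) ∈ Prod.snd '' S := by
        rw [heq]
        simp only [Finset.coe_Icc, Set.mem_Icc]
        omega
      obtain ⟨p3, hp3S, hp3⟩ := h3mem
      obtain ⟨pk, hpkS, hpk⟩ := hk1mem
      have c3 : IsIdealCorner K t I p3.1 3 := by
        have h := hcornOf p3 hp3S
        rwa [hp3] at h
      have ck : IsIdealCorner K t I pk.1 (k + 1) := by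
        have h := hcornOf pk hpkS
        rwa [hpk] at h
      have hI' : IsTSS K (2 + k * t) t I := by
        have : d + k * t = 2 + k * t := by omega
        rwa [this] at hI
      -- degree-2 corner data
      have hu2 : ∃ u ∈ minGens K I, u.card = 2 ∧ fmax u = k₁ + t + 1 := by
        obtain ⟨u, huG, hucard, hufm⟩ := hc2.2.2.1
        refine ⟨u, huG, hucard, ?_⟩
        rw [hufm]
        have h21 : (2 : ℕ) - 1 = 1 := rfl
        rw [h21]
        omega
      have h3bound : ∀ w ∈ minGens K I, w.card = 3 → fmax w ≤ k₁ + t + t := by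
        intro w hw hwc
        have h := hc2.2.2.2.2 3 (by omega) w hw hwc
        have h31 : (3 : ℕ) - 1 = 2 := rfl
        rw [h31] at h
        omega
      have hw3 : ∃ w ∈ minGens K I, w.card = 3 := by
        obtain ⟨w, hwG, hwc, _⟩ := c3.2.2.1
        exact ⟨w, hwG, hwc⟩
      have hbig : ∃ u ∈ minGens K I, u.card = k + 1 := by
        obtain ⟨u, huG, huc, _⟩ := ck.2.2.1
        exact ⟨u, huG, huc⟩
      exact main_contra ht hk hI' hk₁ hu2 h3bound hw3 hbig
  refine ⟨hSfin, ?_, fun hd2 => by rw [hfdneg hd2]; ring, fun hd3 => by rw [hfd0 hd3]; ring⟩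
  rcases le_or_gt d 2 with hd2 | hd3
  · rw [hfdneg hd2]
    have := hSk1 hd2
    omega
  · rw [hfd0 hd3]
    omega
end
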